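/- arXiv:math/0005133 — 5 statements merged into one kernel-verified Lean document; each statement's English description precedes it below -/
import Mathlib

section
/- Let Π ⊆ ℤ₊×ℤ₊ be any set of marked space-time points. Then for all integers t ≥ 0 and 0 ≤ x ≤ t, the oriented digital boiling height equals the longest increasing sequence of marked points in the backward light cone: h_t^Π(x) = L^Π(x,t). -/
open scoped Classical

/-- The oriented digital boiling (ODB) height function `h_t^Π(x)`, with corner
initialization: `h_0(0) = 0`, `h_0(x) = −∞` otherwise (and `h_t(x) = −∞` for `x < 0`).
At each time step, `h_{t+1}(x) = h_t(x-1)` if `h_t(x-1) > h_t(x)`; otherwise the height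
increases by one exactly when `(x,t)` is a marked point of `Π`. -/
noncomputable def odbHeight (P : Set (ℕ × ℕ)) : ℕ → ℤ → WithBot ℤ
  | 0 => fun x => if x = 0 then (0 : WithBot ℤ) else ⊥
  | (t + 1) => fun x =>
      if x < 0 then ⊥
      else if odbHeight P t (x - 1) > odbHeight P t x then odbHeight P t (x - 1)
      else if (x.toNat, t) ∈ P then odbHeight P t x + 1
      else odbHeight P t x

/-- The backward light cone `𝓛_B(x,t) = {(x',t') : 0 ≤ x' ≤ x, x' ≤ t' < x' + t − x}`. -/
def backwardCone (x t : ℕ) : Set (ℕ × ℕ) :=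
  {q | q.1 ≤ x ∧ q.1 ≤ q.2 ∧ q.2 + x < q.1 + t}

/-- `L^Π(x,t)`: the maximal length of an increasing sequence of marked points in the
backward light cone of `(x,t)`; a sequence `(x_i,t_i)` is increasing when
`0 ≤ x_i − x_{i−1} ≤ t_i − t_{i−1} − 1` for consecutive indices. -/
noncomputable def longestIncr (P : Set (ℕ × ℕ)) (x t : ℕ) : ℕ :=
  sSup {k | ∃ s : Fin k → ℕ × ℕ,
    (∀ i, s i ∈ P ∧ s i ∈ backwardCone x t) ∧
    ∀ (i : ℕ) (h : i + 1 < k),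
      (s ⟨i, by omega⟩).1 ≤ (s ⟨i + 1, h⟩).1 ∧
      (s ⟨i + 1, h⟩).1 + (s ⟨i, by omega⟩).2 + 1 ≤ (s ⟨i, by omega⟩).1 + (s ⟨i + 1, h⟩).2}

/-- ℕ-indexed good-sequence predicate. -/
def GoodSeq (P : Set (ℕ × ℕ)) (x t k : ℕ) (S : ℕ → ℕ × ℕ) : Prop :=
  (∀ i < k, S i ∈ P ∧ S i ∈ backwardCone x t) ∧
  ∀ i, i + 1 < k → (S i).1 ≤ (S (i+1)).1 ∧ (S (i+1)).1 + (S i).2 + 1 ≤ (S i).1 + (S (i+1)).2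

def GoodSet (P : Set (ℕ × ℕ)) (x t : ℕ) : Set ℕ := {k | ∃ S, GoodSeq P x t k S}

lemma longestIncr_eq (P : Set (ℕ × ℕ)) (x t : ℕ) :
    longestIncr P x t = sSup (GoodSet P x t) := by
  unfold longestIncr GoodSet
  congr 1
  ext k
  constructor
  · rintro ⟨s, h1, h2⟩
    refine ⟨fun i => if h : i < k then s ⟨i, h⟩ else (0,0), fun i hi => ?_, fun i hi => ?_⟩
    · simpa [hi] using h1 ⟨i, hi⟩
    · have := h2 i hi
      simp only [dif_pos hi, dif_pos (show i < k by omega)]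
      exact this
  · rintro ⟨S, h1, h2⟩
    refine ⟨fun i => S i.1, fun i => h1 i.1 i.2, fun i hi => h2 i hi⟩

lemma GoodSeq.chain {P x t k S} (hg : GoodSeq P x t k S) :
    ∀ j, j < k → ∀ i ≤ j, (S i).1 ≤ (S j).1 ∧ (S j).1 + (S i).2 + (j - i) ≤ (S i).1 + (S j).2 := by
  intro j
  induction j with
  | zero => intro _ i hi; have : i = 0 := Nat.le_zero.mp hi; subst this; omega
  | succ j ih =>
    intro hj i hi
    rcases Nat.lt_or_ge i (j+1) with h | h
    · have h1 := ih (by omega) i (by omega)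
      have h2 := hg.2 j hj
      omega
    · have : i = j + 1 := by omega
      subst this; omega

lemma GoodSeq.k_le_t {P x t k S} (hg : GoodSeq P x t k S) : k ≤ t := by
  rcases Nat.eq_zero_or_pos k with h | h
  · omega
  · have hj : k - 1 < k := by omega
    have h1 := hg.chain (k-1) hj 0 (by omega)
    have h2 := (hg.1 (k-1) hj).2
    have h3 := (hg.1 0 (by omega)).2
    simp only [backwardCone, Set.mem_setOf_eq] at h2 h3
    omega

lemma zero_mem_goodSet (P : Set (ℕ × ℕ)) (x t : ℕ) : 0 ∈ GoodSet P x t :=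
  ⟨fun _ => (0,0), fun i hi => by omega, fun i hi => by omega⟩

lemma goodSet_nonempty (P : Set (ℕ × ℕ)) (x t : ℕ) : (GoodSet P x t).Nonempty :=
  ⟨0, zero_mem_goodSet P x t⟩

lemma goodSet_bddAbove (P : Set (ℕ × ℕ)) (x t : ℕ) : BddAbove (GoodSet P x t) :=
  ⟨t, fun _ hk => hk.choose_spec.k_le_t⟩

lemma longestIncr_mem (P : Set (ℕ × ℕ)) (x t : ℕ) : longestIncr P x t ∈ GoodSet P x t := by
  rw [longestIncr_eq]
  exact Nat.sSup_mem (goodSet_nonempty P x t) (goodSet_bddAbove P x t)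

lemma le_longestIncr {P : Set (ℕ × ℕ)} {x t k : ℕ} (hk : k ∈ GoodSet P x t) :
    k ≤ longestIncr P x t := by
  rw [longestIncr_eq]
  exact le_csSup (goodSet_bddAbove P x t) hk

lemma longestIncr_le {P : Set (ℕ × ℕ)} {x t m : ℕ} (h : ∀ k ∈ GoodSet P x t, k ≤ m) :
    longestIncr P x t ≤ m := by
  rw [longestIncr_eq]
  exact csSup_le (goodSet_nonempty P x t) h

lemma goodSet_mono {P : Set (ℕ × ℕ)} {x t x' t' : ℕ}
    (h : backwardCone x t ⊆ backwardCone x' t') : GoodSet P x t ⊆ GoodSet P x' t' := by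
  rintro k ⟨S, h1, h2⟩
  exact ⟨S, fun i hi => ⟨(h1 i hi).1, h ((h1 i hi).2)⟩, h2⟩

lemma longestIncr_zero {P : Set (ℕ × ℕ)} {x t : ℕ} (h : t ≤ x) : longestIncr P x t = 0 := by
  refine Nat.le_zero.mp (longestIncr_le ?_)
  rintro k ⟨S, h1, h2⟩
  by_contra hk
  have := (h1 0 (by omega)).2
  simp only [backwardCone, Set.mem_setOf_eq] at this
  omega

lemma cone_mono_t (x t : ℕ) : backwardCone x t ⊆ backwardCone x (t+1) := by
  intro q hq; simp only [backwardCone, Set.mem_setOf_eq] at *; omega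

lemma cone_pred (x t : ℕ) : backwardCone (x-1) t ⊆ backwardCone x (t+1) := by
  intro q hq; simp only [backwardCone, Set.mem_setOf_eq] at *; omega

lemma longestIncr_rec (P : Set (ℕ × ℕ)) (x t : ℕ) (hx : x ≤ t) :
    longestIncr P x (t+1) =
      max (longestIncr P (x-1) t) (longestIncr P x t + if (x, t) ∈ P then 1 else 0) := by
  apply le_antisymm
  · apply longestIncr_le
    rintro k ⟨S, h1, h2⟩
    rcases Nat.eq_zero_or_pos k with rfl | hk
    · omega
    · have hlast := h1 (k-1) (by omega)
      have hlcone := hlast.2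
      simp only [backwardCone, Set.mem_setOf_eq] at hlcone
      have hch : ∀ i < k, (S i).1 ≤ (S (k-1)).1 ∧
          (S (k-1)).1 + (S i).2 + (k-1-i) ≤ (S i).1 + (S (k-1)).2 :=
        fun i hi => GoodSeq.chain ⟨h1, h2⟩ (k-1) (by omega) i (by omega)
      by_cases ht : (S (k-1)).2 = t
      · have hx1 : (S (k-1)).1 = x := by omega
        have hmem : (x, t) ∈ P := by
          have := hlast.1; rwa [show S (k-1) = (x,t) from Prod.ext hx1 ht] at this
        have hkm : k - 1 ∈ GoodSet P x t := by
          refine ⟨S, fun i hi => ⟨(h1 i (by omega)).1, ?_⟩, fun i hi => h2 i (by omega)⟩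
          have hc := (h1 i (by omega)).2
          simp only [backwardCone, Set.mem_setOf_eq] at hc ⊢
          have := hch i (by omega)
          omega
        have := le_longestIncr hkm
        simp only [if_pos hmem]
        omega
      · have ht' : (S (k-1)).2 < t := by omega
        by_cases hx1 : (S (k-1)).1 = x
        · have : k ∈ GoodSet P x t := by
            refine ⟨S, fun i hi => ⟨(h1 i hi).1, ?_⟩, h2⟩
            have hc := (h1 i hi).2
            simp only [backwardCone, Set.mem_setOf_eq] at hc ⊢
            have := hch i hi
            omega
          have := le_longestIncr this
          omega
        · have : k ∈ GoodSet P (x-1) t := by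
            refine ⟨S, fun i hi => ⟨(h1 i hi).1, ?_⟩, h2⟩
            have hc := (h1 i hi).2
            simp only [backwardCone, Set.mem_setOf_eq] at hc ⊢
            have := hch i hi
            omega
          have := le_longestIncr this
          omega
  · apply max_le
    · exact le_longestIncr (goodSet_mono (cone_pred x t) (longestIncr_mem P (x-1) t))
    · by_cases hm : (x,t) ∈ P
      · simp only [if_pos hm]
        obtain ⟨S, h1, h2⟩ := longestIncr_mem P x t
        set k := longestIncr P x t with hkdef
        apply le_longestIncr
        refine ⟨fun i => if i < k then S i else (x,t), fun i hi => ?_, fun i hi => ?_⟩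
        · by_cases h : i < k
          · simp only [if_pos h]
            exact ⟨(h1 i h).1, cone_mono_t x t (h1 i h).2⟩
          · simp only [if_neg h]
            refine ⟨hm, ?_⟩
            simp only [backwardCone, Set.mem_setOf_eq]
            exact ⟨le_rfl, hx, by omega⟩
        · by_cases h : i + 1 < k
          · simp only [if_pos h, if_pos (show i < k by omega)]
            exact h2 i h
          · have hi' : i < k := by omega
            simp only [if_pos hi', if_neg (show ¬ (i+1 < k) by omega)]
            have hc := (h1 i hi').2
            simp only [backwardCone, Set.mem_setOf_eq] at hc
            exact ⟨hc.1, by omega⟩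
      · simp only [if_neg hm, add_zero]
        exact le_longestIncr (goodSet_mono (cone_mono_t x t) (longestIncr_mem P x t))

lemma odbHeight_main (P : Set (ℕ × ℕ)) : ∀ (t : ℕ) (z : ℤ),
    odbHeight P t z = if 0 ≤ z ∧ z ≤ t then ((longestIncr P z.toNat t : ℤ) : WithBot ℤ) else ⊥ := by
  intro t
  induction t with
  | zero =>
    intro z
    by_cases hz : z = 0
    · subst hz
      simp [odbHeight, longestIncr_zero (le_refl 0)]
    · simp only [odbHeight, if_neg hz]
      rw [if_neg (show ¬(0 ≤ z ∧ z ≤ ((0:ℕ):ℤ)) by omega)]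
  | succ t ih =>
    intro z
    rcases lt_or_ge z 0 with hz | hz
    · simp only [odbHeight, if_pos hz]
      rw [if_neg (show ¬(0 ≤ z ∧ z ≤ ((t+1:ℕ):ℤ)) by omega)]
    · obtain ⟨x, rfl⟩ : ∃ x : ℕ, z = (x : ℤ) := ⟨z.toNat, by omega⟩
      simp only [odbHeight, if_neg (not_lt.mpr hz)]
      have htn : ((x:ℤ)).toNat = x := by omega
      rw [htn]
      rcases Nat.lt_or_ge t x with hxt | hxt
      · rcases Nat.lt_or_ge (t+1) x with hxt1 | hxt1
        · -- x > t + 1 : everything ⊥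
          rw [ih ((x:ℤ)), ih ((x:ℤ)-1),
            if_neg (show ¬(0 ≤ (x:ℤ) ∧ (x:ℤ) ≤ ((t:ℕ):ℤ)) by omega),
            if_neg (show ¬(0 ≤ (x:ℤ)-1 ∧ (x:ℤ)-1 ≤ ((t:ℕ):ℤ)) by omega),
            if_neg (show ¬(0 ≤ (x:ℤ) ∧ (x:ℤ) ≤ ((t+1:ℕ):ℤ)) by omega)]
          simp
        · -- x = t + 1
          have hx1 : x = t + 1 := by omega
          subst hx1
          have h1 : ((t+1 : ℕ):ℤ) - 1 = ((t : ℕ) : ℤ) := by push_cast; ring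
          rw [h1, ih (((t:ℕ)):ℤ), ih (((t+1:ℕ)):ℤ),
            if_pos (show (0:ℤ) ≤ ((t:ℕ):ℤ) ∧ ((t:ℕ):ℤ) ≤ ((t:ℕ):ℤ) by omega),
            if_neg (show ¬(0 ≤ ((t+1:ℕ):ℤ) ∧ ((t+1:ℕ):ℤ) ≤ ((t:ℕ):ℤ)) by omega),
            Int.toNat_natCast, if_pos (WithBot.bot_lt_coe _),
            if_pos (show (0:ℤ) ≤ ((t+1:ℕ):ℤ) ∧ ((t+1:ℕ):ℤ) ≤ ((t+1:ℕ):ℤ) by omega),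
            longestIncr_zero (le_refl t), longestIncr_zero (le_refl (t+1))]
      · -- x ≤ t
        have hrec := longestIncr_rec P x t hxt
        rcases Nat.eq_zero_or_pos x with hx0 | hx0
        · -- x = 0
          subst hx0
          rw [ih (((0:ℕ)):ℤ), ih ((((0:ℕ)):ℤ)-1),
            if_neg (show ¬(0 ≤ (((0:ℕ)):ℤ)-1 ∧ (((0:ℕ)):ℤ)-1 ≤ ((t:ℕ):ℤ)) by omega),
            if_pos (show (0:ℤ) ≤ (((0:ℕ)):ℤ) ∧ (((0:ℕ)):ℤ) ≤ ((t:ℕ):ℤ) by omega),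
            Int.toNat_natCast,
            if_neg (show ¬(((longestIncr P 0 t : ℤ) : WithBot ℤ) < ⊥) from not_lt_bot),
            if_pos (show (0:ℤ) ≤ (((0:ℕ)):ℤ) ∧ (((0:ℕ)):ℤ) ≤ ((t+1:ℕ):ℤ) by omega),
            hrec, Nat.zero_sub]
          rw [max_eq_right (Nat.le_add_right _ _)]
          by_cases hm : ((0:ℕ), t) ∈ P
          · rw [if_pos hm, if_pos hm]
            push_cast
            rfl
          · rw [if_neg hm, if_neg hm, add_zero]
        · -- 1 ≤ x ≤ t
          have h1 : ((x : ℕ):ℤ) - 1 = ((x - 1 : ℕ) : ℤ) := by push_cast [hx0]; ring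
          rw [h1, ih (((x-1:ℕ)):ℤ), ih (((x:ℕ)):ℤ),
            if_pos (show (0:ℤ) ≤ ((x-1:ℕ):ℤ) ∧ ((x-1:ℕ):ℤ) ≤ ((t:ℕ):ℤ) by omega),
            if_pos (show (0:ℤ) ≤ ((x:ℕ):ℤ) ∧ ((x:ℕ):ℤ) ≤ ((t:ℕ):ℤ) by omega),
            if_pos (show (0:ℤ) ≤ ((x:ℕ):ℤ) ∧ ((x:ℕ):ℤ) ≤ ((t+1:ℕ):ℤ) by omega),
            Int.toNat_natCast (x-1), Int.toNat_natCast x, hrec]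
          set A := longestIncr P (x-1) t
          set B := longestIncr P x t
          by_cases hAB : B < A
          · rw [if_pos (show ((B:ℤ):WithBot ℤ) < ((A:ℤ):WithBot ℤ) from by exact_mod_cast hAB)]
            by_cases hm : (x, t) ∈ P
            · rw [max_eq_left (by simp only [if_pos hm]; omega)]
            · rw [max_eq_left (by simp only [if_neg hm]; omega)]
          · rw [if_neg (show ¬(((B:ℤ):WithBot ℤ) < ((A:ℤ):WithBot ℤ)) from by exact_mod_cast hAB)]
            by_cases hm : (x, t) ∈ P
            · rw [if_pos hm, if_pos hm, max_eq_right (by omega)]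
              push_cast
              ring_nf
            · rw [if_neg hm, if_neg hm, max_eq_right (by omega), add_zero]

/-- Last passage property of oriented digital boiling: for any set `Π` of marked
space-time points and any `0 ≤ x ≤ t`, the ODB height equals the length of the longest
increasing sequence of marked points in the backward light cone: `h_t^Π(x) = L^Π(x,t)`. -/
theorem odbHeight_eq_longestIncr (P : Set (ℕ × ℕ)) (t x : ℕ) (hxt : x ≤ t) :
    odbHeight P t (x : ℤ) = ((longestIncr P x t : ℤ) : WithBot ℤ) := by
  rw [odbHeight_main P t (x : ℤ), if_pos (by constructor <;> exact_mod_cast by omega)]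
  simp
end

section
/- Let 0 ≤ x ≤ t, set m = t − x and n = x + 1, and let Π be random with each point of ℤ₊×ℤ₊ marked independently with probability p ∈ (0,1). Then for every integer h ≥ 0, Prob(h_t^Π(x) ≤ h) = Σ_{k=0}^{mn} C(mn,k) p^k (1−p)^{mn−k} · Prob(L_{m,n,k} ≤ h), where L_{m,n,k} denotes L(A) for A chosen uniformly at random among m×n 0-1 matrices with exactly k entries equal to 1. -/
open MeasureTheory
open scoped Classical

/-- `L(A)`: the maximal length of an increasing path in a 0-1 matrix `A`, i.e. a sequence
of positions with entry 1 whose row indices strictly increase and whose column indices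
weakly increase. -/
noncomputable def pathLen {m n : ℕ} (A : Fin m × Fin n → Bool) : ℕ :=
  sSup {k | ∃ f : Fin k → Fin m × Fin n,
    (∀ i, A (f i) = true) ∧
    ∀ i j : Fin k, i < j → (f i).1 < (f j).1 ∧ (f i).2 ≤ (f j).2}

/-- The number of entries equal to 1 in a 0-1 matrix. -/
def onesCount {m n : ℕ} (A : Fin m × Fin n → Bool) : ℕ :=
  (Finset.univ.filter fun q => A q = true).card

/-- The number of `m × n` 0-1 matrices with exactly `k` ones and longest increasing path
of length at most `h`. -/
noncomputable def matCount (m n k h : ℕ) : ℕ :=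
  Nat.card {A : Fin m × Fin n → Bool // onesCount A = k ∧ pathLen A ≤ h}


/-!
Read the matrix entry `(i, j)` as the space-time point `(j, i + j)`. Then the ODB update rule is
exactly the last-passage recursion for the longest increasing path `L(M, N)` in the `M × N`
corner, so `h_t(x) = L(A)` for the `(t - x) × (x + 1)` matrix `A` of marks feeding `(x, t)`.
Its `mn` entries are independent Bernoulli(`p`); conditioned on having `k` ones, `A` is uniform
among such matrices, which gives the binomial mixture.
-/

open Function

section GridPaths

/-- Working in the infinite array `ℕ × ℕ → Bool` lets the corner size `M × N` vary without
re-indexing between `Fin` types. -/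
def gridPathLengths (B : ℕ × ℕ → Bool) (M N : ℕ) : Set ℕ :=
  {k | ∃ f : Fin k → ℕ × ℕ,
    (∀ i, (f i).1 < M ∧ (f i).2 < N ∧ B (f i) = true) ∧
    ∀ i j : Fin k, i < j → (f i).1 < (f j).1 ∧ (f i).2 ≤ (f j).2}

noncomputable def gridPathLen (B : ℕ × ℕ → Bool) (M N : ℕ) : ℕ :=
  sSup (gridPathLengths B M N)

variable {B : ℕ × ℕ → Bool} {M N M' N' k : ℕ}

lemma zero_mem_gridPathLengths : 0 ∈ gridPathLengths B M N :=
  ⟨Fin.elim0, fun i => i.elim0, fun i => i.elim0⟩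

lemma le_of_mem_gridPathLengths (hk : k ∈ gridPathLengths B M N) : k ≤ M := by
  obtain ⟨f, hf, hmono⟩ := hk
  have hs : StrictMono fun i : Fin k => (⟨(f i).1, (hf i).1⟩ : Fin M) := fun i j hij =>
    Fin.mk_lt_mk.2 (hmono i j hij).1
  simpa using Fintype.card_le_of_injective _ hs.injective

lemma bddAbove_gridPathLengths : BddAbove (gridPathLengths B M N) :=
  ⟨M, fun _ => le_of_mem_gridPathLengths⟩

lemma gridPathLen_mem : gridPathLen B M N ∈ gridPathLengths B M N :=
  Nat.sSup_mem ⟨0, zero_mem_gridPathLengths⟩ bddAbove_gridPathLengths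

lemma le_gridPathLen (hk : k ∈ gridPathLengths B M N) : k ≤ gridPathLen B M N :=
  le_csSup bddAbove_gridPathLengths hk

lemma gridPathLen_mono (hM : M ≤ M') (hN : N ≤ N') :
    gridPathLen B M N ≤ gridPathLen B M' N' := by
  obtain ⟨f, hf, hmono⟩ := gridPathLen_mem (B := B) (M := M) (N := N)
  exact le_gridPathLen
    ⟨f, fun i => ⟨(hf i).1.trans_le hM, (hf i).2.1.trans_le hN, (hf i).2.2⟩, hmono⟩

@[simp]
lemma gridPathLen_zero_left : gridPathLen B 0 N = 0 :=
  Nat.le_zero.1 (le_of_mem_gridPathLengths gridPathLen_mem)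

@[simp]
lemma gridPathLen_zero_right : gridPathLen B M 0 = 0 := by
  obtain ⟨f, hf, -⟩ := gridPathLen_mem (B := B) (M := M) (N := 0)
  by_contra hne
  exact Nat.not_lt_zero _ (hf ⟨0, Nat.pos_of_ne_zero hne⟩).2.1

lemma le_last_of_increasing {f : Fin (k + 1) → ℕ × ℕ}
    (hmono : ∀ i j : Fin (k + 1), i < j → (f i).1 < (f j).1 ∧ (f i).2 ≤ (f j).2)
    (i : Fin (k + 1)) : (f i).1 ≤ (f (Fin.last k)).1 ∧ (f i).2 ≤ (f (Fin.last k)).2 := by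
  rcases (Fin.le_last i).lt_or_eq with hlt | rfl
  · exact ⟨(hmono i _ hlt).1.le, (hmono i _ hlt).2⟩
  · exact ⟨le_rfl, le_rfl⟩

lemma le_gridPathLen_add_one_of_mem_succ_left (hk : k ∈ gridPathLengths B (M + 1) N) :
    k ≤ gridPathLen B M N + 1 := by
  obtain ⟨f, hf, hmono⟩ := hk
  cases k with
  | zero => exact Nat.zero_le _
  | succ k =>
    refine Nat.succ_le_succ (le_gridPathLen ⟨fun i => f i.castSucc, fun i => ?_,
      fun i j hij => hmono _ _ (Fin.castSucc_lt_castSucc_iff.2 hij)⟩)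
    have := (hmono i.castSucc (Fin.last k) (Fin.castSucc_lt_last i)).1
    have := (hf (Fin.last k)).1
    exact ⟨show (f i.castSucc).1 < M by omega, (hf _).2.1, (hf _).2.2⟩

/-- An increasing path avoiding the corner `(M, N)` either stays in the first `M` rows or
ends in row `M` at a column `< N`, and then lies in the first `N` columns. -/
lemma le_max_gridPathLen_of_mem_of_corner_false (hB : B (M, N) = false)
    (hk : k ∈ gridPathLengths B (M + 1) (N + 1)) :
    k ≤ max (gridPathLen B (M + 1) N) (gridPathLen B M (N + 1)) := by
  obtain ⟨f, hf, hmono⟩ := hk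
  cases k with
  | zero => exact Nat.zero_le _
  | succ k =>
    have hlast := le_last_of_increasing hmono
    by_cases hrow : (f (Fin.last k)).1 < M
    · exact le_max_of_le_right <| le_gridPathLen
        ⟨f, fun i => ⟨(hlast i).1.trans_lt hrow, (hf i).2.1, (hf i).2.2⟩, hmono⟩
    · have hcol : (f (Fin.last k)).2 < N := by
        have hrow' : (f (Fin.last k)).1 = M := by have := (hf (Fin.last k)).1; omega
        refine lt_of_le_of_ne (Nat.lt_succ_iff.1 (hf _).2.1) fun hcol => ?_
        have := (hf (Fin.last k)).2.2
        rw [show f (Fin.last k) = (M, N) from Prod.ext hrow' hcol, hB] at this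
        exact Bool.false_ne_true this
      exact le_max_of_le_left <| le_gridPathLen
        ⟨f, fun i => ⟨(hf i).1, (hlast i).2.trans_lt hcol, (hf i).2.2⟩, hmono⟩

lemma gridPathLen_add_one_le_of_corner_true (hB : B (M, N) = true) :
    gridPathLen B M (N + 1) + 1 ≤ gridPathLen B (M + 1) (N + 1) := by
  obtain ⟨f, hf, hmono⟩ := gridPathLen_mem (B := B) (M := M) (N := N + 1)
  apply le_gridPathLen
  refine ⟨Fin.lastCases (M, N) f, fun i => ?_, fun i j hij => ?_⟩
  · induction i using Fin.lastCases with
    | last => simpa using hB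
    | cast i => simpa using ⟨(hf i).1.le, Nat.lt_succ_iff.1 (hf i).2.1, (hf i).2.2⟩
  · induction j using Fin.lastCases with
    | last =>
      induction i using Fin.lastCases with
      | last => exact absurd hij (lt_irrefl _)
      | cast i => simpa using ⟨(hf i).1, Nat.lt_succ_iff.1 (hf i).2.1⟩
    | cast j =>
      induction i using Fin.lastCases with
      | last => exact absurd hij (not_lt.2 (Fin.le_last _))
      | cast i => simpa using hmono i j (by simpa using hij)

/-- The last-passage recursion, in the `if` form of the ODB update rule rather than as a `max`. -/
lemma gridPathLen_succ_succ (B : ℕ × ℕ → Bool) (M N : ℕ) :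
    gridPathLen B (M + 1) (N + 1) =
      if gridPathLen B M (N + 1) < gridPathLen B (M + 1) N then gridPathLen B (M + 1) N
      else gridPathLen B M (N + 1) + if B (M, N) = true then 1 else 0 := by
  have hup : gridPathLen B M (N + 1) ≤ gridPathLen B (M + 1) (N + 1) :=
    gridPathLen_mono (Nat.le_succ _) le_rfl
  have hleft : gridPathLen B (M + 1) N ≤ gridPathLen B (M + 1) (N + 1) :=
    gridPathLen_mono le_rfl (Nat.le_succ _)
  have hdrop : gridPathLen B (M + 1) (N + 1) ≤ gridPathLen B M (N + 1) + 1 :=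
    le_gridPathLen_add_one_of_mem_succ_left gridPathLen_mem
  split_ifs with hlt hB
  · omega
  · have := gridPathLen_add_one_le_of_corner_true hB
    omega
  · have := le_max_gridPathLen_of_mem_of_corner_false (Bool.eq_false_iff.2 hB) gridPathLen_mem
    omega

lemma pathLen_eq_gridPathLen (B : ℕ × ℕ → Bool) (M N : ℕ) :
    pathLen (fun z : Fin M × Fin N => B (z.1, z.2)) = gridPathLen B M N := by
  unfold pathLen gridPathLen
  congr 1
  ext k
  constructor
  · rintro ⟨f, hB, hmono⟩
    exact ⟨fun i => ((f i).1, (f i).2), fun i => ⟨(f i).1.isLt, (f i).2.isLt, hB i⟩, hmono⟩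
  · rintro ⟨f, hf, hmono⟩
    exact ⟨fun i => (⟨(f i).1, (hf i).1⟩, ⟨(f i).2, (hf i).2.1⟩), fun i => (hf i).2.2,
      hmono⟩

end GridPaths

section ODB

noncomputable def shear (P : Set (ℕ × ℕ)) (q : ℕ × ℕ) : Bool :=
  decide ((q.2, q.1 + q.2) ∈ P)

variable {P : Set (ℕ × ℕ)}

lemma shear_sub_apply {t x : ℕ} (hx : x ≤ t) : shear P (t - x, x) = decide ((x, t) ∈ P) := by
  simp [shear, Nat.sub_add_cancel hx]

lemma odbHeight_of_neg {t : ℕ} {x : ℤ} (hx : x < 0) : odbHeight P t x = ⊥ := by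
  cases t <;> simp [odbHeight, hx, hx.ne]

lemma odbHeight_of_lt {t : ℕ} {x : ℤ} (hx : (t : ℤ) < x) : odbHeight P t x = ⊥ := by
  induction t generalizing x with
  | zero => simp [odbHeight, show x ≠ 0 by omega]
  | succ t ih =>
    simp [odbHeight, ih (show (t : ℤ) < x - 1 by omega), ih (show (t : ℤ) < x by omega),
      show ¬ x < 0 by omega]

lemma odbHeight_succ_natCast (t x : ℕ) :
    odbHeight P (t + 1) x =
      if odbHeight P t (x - 1) > odbHeight P t x then odbHeight P t (x - 1)
      else if (x, t) ∈ P then odbHeight P t x + 1 else odbHeight P t x := by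
  simp [odbHeight]

lemma odbStep_natCast (a b : ℕ) (c : Prop) [Decidable c] :
    (if ((a : ℤ) : WithBot ℤ) > ((b : ℤ) : WithBot ℤ) then ((a : ℤ) : WithBot ℤ)
      else if c then ((b : ℤ) : WithBot ℤ) + 1 else ((b : ℤ) : WithBot ℤ)) =
      (((if b < a then a else b + if c then 1 else 0 : ℕ) : ℤ) : WithBot ℤ) := by
  split_ifs <;> simp_all

lemma odbHeight_eq_gridPathLen (P : Set (ℕ × ℕ)) {t x : ℕ} (hx : x ≤ t) :
    odbHeight P t x = ((gridPathLen (shear P) (t - x) (x + 1) : ℤ) : WithBot ℤ) := by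
  induction t generalizing x with
  | zero =>
    obtain rfl : x = 0 := by omega
    simp [odbHeight]
  | succ t ih =>
    rw [odbHeight_succ_natCast]
    rcases hx.lt_or_eq with hx | rfl
    · have hxt : x ≤ t := by omega
      rw [ih hxt, show t + 1 - x = t - x + 1 by omega, gridPathLen_succ_succ, shear_sub_apply hxt]
      rcases x with _ | x
      -- `h_t(-1) = ⊥` plays the role of `L(t + 1, 0) = 0`
      · by_cases hmark : (0, t) ∈ P <;> simp [odbHeight_of_neg, hmark]
      · rw [Nat.cast_succ, add_sub_cancel_right, ih (by omega),
          show t - x = t - (x + 1) + 1 by omega]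
        simpa using odbStep_natCast _ _ _
    · rw [Nat.cast_succ, add_sub_cancel_right, ih le_rfl, odbHeight_of_lt (by simp)]
      simp

def shearEmbedding (m n : ℕ) : Fin m × Fin n ↪ ℕ × ℕ where
  toFun z := (z.2, z.1 + z.2)
  inj' := by
    rintro ⟨i, j⟩ ⟨i', j'⟩ h
    simp only [Prod.mk.injEq] at h
    exact Prod.ext (Fin.ext (show (i : ℕ) = i' by omega)) (Fin.ext h.1)

lemma odbHeight_eq_pathLen (ω : ℕ × ℕ → Bool) {t x : ℕ} (hx : x ≤ t) :
    odbHeight {q | ω q = true} t x =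
      ((pathLen (ω ∘ shearEmbedding (t - x) (x + 1)) : ℤ) : WithBot ℤ) := by
  rw [odbHeight_eq_gridPathLen _ hx, ← pathLen_eq_gridPathLen]
  simp [shear]
  rfl

end ODB

section Bernoulli

variable {ι α : Type*} [Fintype α] {p : ℝ} {μ : Measure (ι → Bool)}

lemma measure_comp_eq_prod (hμ : ∀ (S : Finset ι) (f : ι → Bool),
      μ {ω | ∀ q ∈ S, ω q = f q} = ∏ q ∈ S, ENNReal.ofReal (if f q then p else 1 - p))
    (e : α ↪ ι) (A : α → Bool) :
    μ {ω | ω ∘ e = A} = ∏ a, ENNReal.ofReal (if A a then p else 1 - p) := by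
  have hset : {ω : ι → Bool | ω ∘ e = A} =
      {ω | ∀ q ∈ Finset.univ.map e, ω q = extend e A (fun _ => false) q} := by
    ext ω
    simp [funext_iff, e.injective.extend_apply]
  rw [hset, hμ, Finset.prod_map]
  simp [e.injective.extend_apply]

lemma toReal_measure_comp_eq_sum [DecidableEq α] (hp0 : 0 ≤ p) (hp1 : p ≤ 1)
    (hμ : ∀ (S : Finset ι) (f : ι → Bool),
      μ {ω | ∀ q ∈ S, ω q = f q} = ∏ q ∈ S, ENNReal.ofReal (if f q then p else 1 - p))
    (e : α ↪ ι) (Q : (α → Bool) → Prop) [DecidablePred Q] :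
    (μ {ω | Q (ω ∘ e)}).toReal = ∑ A with Q A, ∏ a, if A a then p else 1 - p := by
  have hnonneg : ∀ A : α → Bool, ∀ a, 0 ≤ if A a then p else 1 - p := fun A a => by
    split_ifs <;> linarith
  have hprod : ∀ A : α → Bool, 0 ≤ ∏ a, if A a then p else 1 - p := fun A =>
    Finset.prod_nonneg fun a _ => hnonneg A a
  have hg : Measurable fun ω : ι → Bool => ω ∘ e :=
    measurable_pi_lambda _ fun a => measurable_pi_apply (e a)
  have hmap : ∀ s : Set (α → Bool), μ.map (· ∘ e) s = μ {ω | ω ∘ e ∈ s} := fun s =>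
    Measure.map_apply hg (DiscreteMeasurableSpace.forall_measurableSet s)
  calc (μ {ω | Q (ω ∘ e)}).toReal
      = (μ.map (· ∘ e) ↑(Finset.univ.filter Q)).toReal := by simp [hmap]
    _ = (∑ A with Q A, μ.map (· ∘ e) {A}).toReal := by rw [sum_measure_singleton]
    _ = ∑ A with Q A, ∏ a, if A a then p else 1 - p := by
      simp_rw [hmap, Set.mem_singleton_iff, measure_comp_eq_prod hμ,
        ← ENNReal.ofReal_prod_of_nonneg fun a _ => hnonneg _ a]
      rw [← ENNReal.ofReal_sum_of_nonneg fun A _ => hprod A,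
        ENNReal.toReal_ofReal (Finset.sum_nonneg fun A _ => hprod A)]

end Bernoulli

section MatrixCounting

variable {m n : ℕ}

lemma onesCount_le (A : Fin m × Fin n → Bool) : onesCount A ≤ m * n :=
  (Finset.card_filter_le _ _).trans (by simp)

lemma prod_ite_eq_pow_onesCount (p : ℝ) (A : Fin m × Fin n → Bool) :
    ∏ z, (if A z then p else 1 - p) = p ^ onesCount A * (1 - p) ^ (m * n - onesCount A) := by
  have hzeros : (Finset.univ.filter fun z => ¬ A z = true).card = m * n - onesCount A := by
    have := Finset.card_filter_add_card_filter_not (s := Finset.univ) fun z => A z = true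
    simp only [Finset.card_univ, Fintype.card_prod, Fintype.card_fin] at this
    rw [onesCount]
    omega
  rw [Finset.prod_ite, Finset.prod_const, Finset.prod_const, hzeros, onesCount]

lemma sum_prod_ite_eq_sum_card (p : ℝ) (Q : (Fin m × Fin n → Bool) → Prop)
    [DecidablePred Q] :
    ∑ A with Q A, ∏ z, (if A z then p else 1 - p) =
      ∑ k ∈ Finset.range (m * n + 1),
        ((Finset.univ.filter fun A => onesCount A = k ∧ Q A).card : ℝ) *
          (p ^ k * (1 - p) ^ (m * n - k)) := by
  rw [← Finset.sum_fiberwise_of_maps_to (g := onesCount) (t := Finset.range (m * n + 1))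
    fun A _ => Finset.mem_range_succ_iff.2 (onesCount_le A)]
  refine Finset.sum_congr rfl fun k _ => ?_
  rw [Finset.filter_filter, Finset.card_eq_sum_ones, Nat.cast_sum, Finset.sum_mul]
  refine Finset.sum_congr (by simp [and_comm]) fun A hA => ?_
  rw [prod_ite_eq_pow_onesCount, (Finset.mem_filter.1 hA).2.1]
  simp

end MatrixCounting

theorem odb_distribution_binomial_mixture_general {p : ℝ} (hp0 : 0 < p) (hp1 : p < 1)
    (μ : Measure (ℕ × ℕ → Bool))
    (hμ : ∀ (S : Finset (ℕ × ℕ)) (f : ℕ × ℕ → Bool),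
      μ {ω | ∀ q ∈ S, ω q = f q} =
        ∏ q ∈ S, ENNReal.ofReal (if f q then p else 1 - p))
    (x t : ℕ) (hxt : x ≤ t) (h : ℕ) :
    (μ {ω | odbHeight {q | ω q = true} t (x : ℤ) ≤ ((h : ℤ) : WithBot ℤ)}).toReal =
      ∑ k ∈ Finset.range ((t - x) * (x + 1) + 1),
        (Nat.choose ((t - x) * (x + 1)) k : ℝ) * p ^ k *
          (1 - p) ^ ((t - x) * (x + 1) - k) *
          ((matCount (t - x) (x + 1) k h : ℝ) / (Nat.choose ((t - x) * (x + 1)) k : ℝ)) := by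
  have hevent :
      {ω : ℕ × ℕ → Bool | odbHeight {q | ω q = true} t x ≤ ((h : ℤ) : WithBot ℤ)} =
      {ω | pathLen (ω ∘ shearEmbedding (t - x) (x + 1)) ≤ h} := by
    ext ω
    simp [odbHeight_eq_pathLen ω hxt]
  rw [hevent, toReal_measure_comp_eq_sum hp0.le hp1.le hμ _ fun A => pathLen A ≤ h,
    sum_prod_ite_eq_sum_card p fun A => pathLen A ≤ h]
  refine Finset.sum_congr rfl fun k hk => ?_
  have hchoose : (Nat.choose ((t - x) * (x + 1)) k : ℝ) ≠ 0 :=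
    Nat.cast_ne_zero.2 (Nat.choose_pos (Finset.mem_range_succ_iff.1 hk)).ne'
  rw [matCount, Nat.card_eq_fintype_card, Fintype.card_subtype]
  field_simp

/-- Let `Π` be a random subset of `ℤ₊ × ℤ₊` where each point is marked independently with
probability `p`. Then for `0 ≤ x ≤ t`, with `m = t − x` and `n = x + 1`,
`Prob(h_t(x) ≤ h) = Σ_{k=0}^{mn} C(mn,k) p^k (1−p)^{mn−k} · Prob(L_{m,n,k} ≤ h)`,
where `Prob(L_{m,n,k} ≤ h)` is the proportion, among `m × n` 0-1 matrices with exactly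
`k` ones, of those whose longest increasing path has length at most `h`. -/
theorem odb_distribution_binomial_mixture {p : ℝ} (hp0 : 0 < p) (hp1 : p < 1)
    (μ : Measure (ℕ × ℕ → Bool)) [IsProbabilityMeasure μ]
    (hμ : ∀ (S : Finset (ℕ × ℕ)) (f : ℕ × ℕ → Bool),
      μ {ω | ∀ q ∈ S, ω q = f q} =
        ∏ q ∈ S, ENNReal.ofReal (if f q then p else 1 - p))
    (x t : ℕ) (hxt : x ≤ t) (h : ℕ) :
    (μ {ω | odbHeight {q | ω q = true} t (x : ℤ) ≤ ((h : ℤ) : WithBot ℤ)}).toReal =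
      ∑ k ∈ Finset.range ((t - x) * (x + 1) + 1),
        (Nat.choose ((t - x) * (x + 1)) k : ℝ) * p ^ k *
          (1 - p) ^ ((t - x) * (x + 1) - k) *
          ((matCount (t - x) (x + 1) k h : ℝ) / (Nat.choose ((t - x) * (x + 1)) k : ℝ)) :=
  odb_distribution_binomial_mixture_general hp0 hp1 μ hμ x t hxt h
end

section
/- Fix p ∈ (0,1) and ε > 0, and for each m ≥ 1 set n_m = ⌈(1+ε)(1/p − 1)m⌉. Let A_m be a random m×n_m matrix with i.i.d. Bernoulli(p) entries. Then there is δ > 0 such that for all sufficiently large m, Prob(L(A_m) < m) ≤ e^{−δm}; in particular Prob(L(A_m) = m) → 1 as m → ∞. (Equivalently, in the deterministic regime p > p_c = 1 − x/t of ODB, Prob(h_t(x) = t − x) → 1.) -/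
open MeasureTheory Filter
open scoped Classical Topology

/-- The distribution of a random `m × n` 0-1 matrix with i.i.d. Bernoulli(p) entries. -/
noncomputable def bernoulliMatrixMeasure (m n : ℕ) (p : ℝ) (hp1 : p ≤ 1) :
    Measure (Fin m × Fin n → Bool) :=
  Measure.pi fun _ =>
    (PMF.bernoulli (Real.toNNReal p) (Real.toNNReal_le_one.mpr hp1)).toMeasure

/-!
Greedy argument: scan the rows from top to bottom and in each row take the first `1` at or to
the right of the column chosen in the previous row. The gaps between successive chosen columns
are i.i.d. geometric, `P(G = g) = (1 - p) ^ g * p`, so `E[a ^ G] = p / (1 - (1 - p) * a)` for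
`(1 - p) * a < 1`, and the greedy path fails only if the gaps add up to at least `n`.
Conditioning on the first row turns this into a recursion for the failure probability, from
which induction on `m` gives the Chernoff bound `P(L(A) < m) ≤ E[a ^ G] ^ m / a ^ n`.
Since `E[G] = 1 / p - 1` and `n ≥ (1 + ε) (1 / p - 1) m`, taking `a` slightly above `1` makes
the right-hand side exponentially small in `m`.
-/

open Finset

theorem Fin.monotone_cons_iff {α : Type*} [Preorder α] {n : ℕ} {a : α} {f : Fin n → α} :
    Monotone (Fin.cons a f : Fin (n + 1) → α) ↔ (∀ i, a ≤ f i) ∧ Monotone f := by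
  simp only [monotone_iff_forall_lt]
  exact Fin.liftFun_cons _

theorem Finset.sum_filter_prod_eq_prod_sum_filter {ι κ R : Type*} [Fintype ι] [DecidableEq ι]
    [Fintype κ] [CommSemiring R] (P : ι → κ → Prop) [DecidablePred fun r : ι → κ => ∀ l, P l (r l)]
    [∀ l, DecidablePred (P l)] (f : ι → κ → R) :
    ∑ r : ι → κ with ∀ l, P l (r l), ∏ l, f l (r l) = ∏ l, ∑ a with P l a, f l a := by
  simp only [sum_filter, Fintype.prod_sum, prod_ite_zero, mem_univ, forall_const]
  congr!

lemma Fin.sum_filter_le_val {M : Type*} [AddCommMonoid M] (n j : ℕ) (f : ℕ → M) :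
    ∑ k : Fin n with j ≤ k.val, f k.val = ∑ g ∈ range (n - j), f (j + g) := by
  rw [sum_filter, Fin.sum_univ_eq_sum_range (fun k => if j ≤ k then f k else 0), ← sum_filter,
    range_eq_Ico, Ico_filter_le, max_eq_right j.zero_le, sum_Ico_eq_sum_range]

lemma Fin.card_filter_le_val_lt (n j k : ℕ) :
    #{l : Fin n | j ≤ l.val ∧ l.val < k} = min n k - j := by
  rw [← card_map Fin.valEmbedding, map_filter', ← Nat.card_Ico]
  congr 1
  ext x
  simp only [mem_filter, Finset.mem_map, mem_univ, true_and, Fin.valEmbedding_apply, mem_Ico,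
    Fin.exists_iff]
  grind

section pathLen

variable {m n : ℕ} (A : Fin m × Fin n → Bool)

def IsIncreasingPath {k : ℕ} (f : Fin k → Fin m × Fin n) : Prop :=
  (∀ i, A (f i) = true) ∧ ∀ i j : Fin k, i < j → (f i).1 < (f j).1 ∧ (f i).2 ≤ (f j).2

variable {A}

lemma IsIncreasingPath.length_le {k : ℕ} {f : Fin k → Fin m × Fin n} (hf : IsIncreasingPath A f) :
    k ≤ m := by
  simpa using Fintype.card_le_of_injective _ (StrictMono.injective fun i j hij => (hf.2 i j hij).1)

lemma bddAbove_increasingPathLengths :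
    BddAbove {k | ∃ f : Fin k → Fin m × Fin n, IsIncreasingPath A f} :=
  ⟨m, fun _ ⟨_, hf⟩ => hf.length_le⟩

variable (A)

lemma exists_isIncreasingPath_pathLen :
    ∃ f : Fin (pathLen A) → Fin m × Fin n, IsIncreasingPath A f :=
  Nat.sSup_mem (s := {k | ∃ f : Fin k → Fin m × Fin n, IsIncreasingPath A f})
    ⟨0, Fin.elim0, fun i => i.elim0, fun i => i.elim0⟩ bddAbove_increasingPathLengths

lemma pathLen_le : pathLen A ≤ m :=
  (exists_isIncreasingPath_pathLen A).choose_spec.length_le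

lemma le_pathLen_iff :
    m ≤ pathLen A ↔ ∃ g : Fin m → Fin n, Monotone g ∧ ∀ i, A (i, g i) = true := by
  constructor
  · intro hm
    obtain ⟨f, hA, hf⟩ := exists_isIncreasingPath_pathLen A
    set f' : Fin m → Fin m × Fin n := fun i => f (Fin.castLE hm i)
    have hf' : ∀ i j, i < j → (f' i).1 < (f' j).1 ∧ (f' i).2 ≤ (f' j).2 :=
      fun i j hij => hf (Fin.castLE hm i) (Fin.castLE hm j) hij
    have hrow : ∀ i, (f' i).1 = i :=
      fun i => StrictMono.apply_eq (f := fun i => (f' i).1) fun i j hij => (hf' i j hij).1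
    refine ⟨fun i => (f' i).2, monotone_iff_forall_lt.2 fun i j hij => (hf' i j hij).2,
      fun i => ?_⟩
    have h : A (f' i) = true := hA _
    rwa [← Prod.mk.eta (p := f' i), hrow i] at h
  · rintro ⟨g, hg, hA⟩
    exact le_csSup bddAbove_increasingPathLengths
      ⟨fun i => (i, g i), hA, fun i j hij => ⟨hij, hg hij.le⟩⟩

end pathLen

section Transversal

variable {m n : ℕ}

def HasTransversalFrom (j : ℕ) (B : Fin m → Fin n → Bool) : Prop :=
  ∃ g : Fin m → Fin n, Monotone g ∧ ∀ i, j ≤ (g i : ℕ) ∧ B i (g i) = true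

lemma HasTransversalFrom.of_le {j k : ℕ} {B : Fin m → Fin n → Bool} (hjk : j ≤ k)
    (h : HasTransversalFrom k B) : HasTransversalFrom j B :=
  let ⟨g, hg, hB⟩ := h
  ⟨g, hg, fun i => ⟨hjk.trans (hB i).1, (hB i).2⟩⟩

lemma hasTransversalFrom_of_isEmpty (j : ℕ) (B : Fin 0 → Fin n → Bool) : HasTransversalFrom j B :=
  ⟨Fin.elim0, fun i => i.elim0, fun i => i.elim0⟩

lemma hasTransversalFrom_cons_iff {j : ℕ} {r : Fin n → Bool} {B : Fin m → Fin n → Bool} :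
    HasTransversalFrom j (Fin.cons r B : Fin (m + 1) → Fin n → Bool) ↔
      ∃ k : Fin n, j ≤ (k : ℕ) ∧ r k = true ∧ HasTransversalFrom k B := by
  constructor
  · rintro ⟨g, hg, hB⟩
    rw [← Fin.cons_self_tail g, Fin.monotone_cons_iff] at hg
    refine ⟨g 0, (hB 0).1, (hB 0).2, Fin.tail g, hg.2, fun i => ⟨hg.1 i, (hB i.succ).2⟩⟩
  · rintro ⟨k, hjk, hr, g, hg, hB⟩
    refine ⟨Fin.cons k g, Fin.monotone_cons_iff.2 ⟨fun i => (hB i).1, hg⟩, Fin.cases ?_ fun i => ?_⟩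
    · exact ⟨hjk, hr⟩
    · exact ⟨hjk.trans (hB i).1, (hB i).2⟩

lemma pathLen_lt_iff (A : Fin m × Fin n → Bool) :
    pathLen A < m ↔ ¬HasTransversalFrom 0 (Function.curry A) := by
  rw [← not_le, le_pathLen_iff]
  simp [HasTransversalFrom, Function.curry]

end Transversal

section BernoulliWeight

variable {ι : Type*} [Fintype ι] [DecidableEq ι] (p : ℝ)

def bernoulliWeight (b : Bool) : ℝ := bif b then p else 1 - p

lemma sum_prod_bernoulliWeight : ∑ r : ι → Bool, ∏ l, bernoulliWeight p (r l) = 1 := by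
  rw [← Fintype.prod_sum]
  simp [bernoulliWeight]

lemma sum_prod_prod_bernoulliWeight {κ : Type*} [Fintype κ] [DecidableEq κ] :
    ∑ B : κ → ι → Bool, ∏ i, ∏ l, bernoulliWeight p (B i l) = 1 := by
  rw [← Fintype.prod_sum (fun _ (r : ι → Bool) => ∏ l, bernoulliWeight p (r l))]
  simp [sum_prod_bernoulliWeight]

lemma sum_filter_prod_bernoulliWeight {S T : Finset ι} (hST : Disjoint S T) :
    ∑ r : ι → Bool with ∀ l, (l ∈ S → r l = false) ∧ (l ∈ T → r l = true),
      ∏ l, bernoulliWeight p (r l) = (1 - p) ^ #S * p ^ #T := by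
  rw [sum_filter_prod_eq_prod_sum_filter fun l b => (l ∈ S → b = false) ∧ (l ∈ T → b = true)]
  have hcoord : ∀ l, ∑ b with (l ∈ S → b = false) ∧ (l ∈ T → b = true), bernoulliWeight p b =
      (if l ∈ S then 1 - p else 1) * (if l ∈ T then p else 1) := by
    intro l
    by_cases hS : l ∈ S
    · have hT : l ∉ T := disjoint_left.1 hST hS
      simp [hS, hT, bernoulliWeight, sum_filter]
    · by_cases hT : l ∈ T <;> simp [hS, hT, bernoulliWeight, sum_filter]
  simp only [hcoord, prod_mul_distrib, prod_ite_mem, univ_inter, prod_const]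

end BernoulliWeight

section FirstOne

variable {n : ℕ}

def firstOneFrom (j : ℕ) (r : Fin n → Bool) : Option (Fin n) :=
  Fin.find? fun l => decide (j ≤ l.val) && r l

lemma firstOneFrom_eq_none_iff {j : ℕ} {r : Fin n → Bool} :
    firstOneFrom j r = none ↔ ∀ l : Fin n, j ≤ l.val → r l = false := by
  simp [firstOneFrom]

lemma firstOneFrom_eq_some_iff {j : ℕ} {r : Fin n → Bool} {k : Fin n} :
    firstOneFrom j r = some k ↔
      j ≤ k.val ∧ r k = true ∧ ∀ l : Fin n, j ≤ l.val → l < k → r l = false := by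
  simp only [firstOneFrom, Fin.find?_eq_some_iff, Bool.and_eq_true, decide_eq_true_eq,
    Bool.and_eq_false_iff, decide_eq_false_iff_not]
  grind

variable (p : ℝ)

lemma sum_firstOneFrom_eq_none (j : ℕ) :
    ∑ r : Fin n → Bool with firstOneFrom j r = none, ∏ l, bernoulliWeight p (r l) =
      (1 - p) ^ (n - j) := by
  have h := sum_filter_prod_bernoulliWeight p (S := {l : Fin n | j ≤ l.val ∧ l.val < n})
    (disjoint_empty_right _)
  rw [Fin.card_filter_le_val_lt, min_self, card_empty, pow_zero, mul_one] at h
  rw [← h]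
  congr 1
  ext r
  simp [firstOneFrom_eq_none_iff]

lemma sum_firstOneFrom_eq_some {j : ℕ} {k : Fin n} (hjk : j ≤ k.val) :
    ∑ r : Fin n → Bool with firstOneFrom j r = some k, ∏ l, bernoulliWeight p (r l) =
      (1 - p) ^ (k.val - j) * p := by
  have h := sum_filter_prod_bernoulliWeight p (S := {l : Fin n | j ≤ l.val ∧ l.val < k.val})
    (T := {k}) (by simp)
  rw [Fin.card_filter_le_val_lt, min_eq_right k.isLt.le, card_singleton, pow_one] at h
  rw [← h]
  congr 1
  ext r
  simp only [mem_filter, mem_univ, true_and, firstOneFrom_eq_some_iff, hjk, mem_singleton]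
  exact ⟨fun ⟨hk, hl⟩ l => ⟨fun hl' => hl l hl'.1 hl'.2, fun h => h ▸ hk⟩,
    fun h => ⟨(h k).2 rfl, fun l hjl hlk => (h l).1 ⟨hjl, hlk⟩⟩⟩

end FirstOne

section FailWeight

variable (p : ℝ)

noncomputable def failWeight (m n j : ℕ) : ℝ :=
  ∑ B : Fin m → Fin n → Bool with ¬HasTransversalFrom j B, ∏ i, ∏ l, bernoulliWeight p (B i l)

lemma failWeight_zero (n j : ℕ) : failWeight p 0 n j = 0 := by
  simp [failWeight, hasTransversalFrom_of_isEmpty]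

lemma sum_not_hasTransversalFrom_cons {m n j : ℕ} (r : Fin n → Bool) :
    ∑ B : Fin m → Fin n → Bool with ¬HasTransversalFrom j (Fin.cons r B : Fin (m + 1) → _),
      ∏ i, ∏ l, bernoulliWeight p (B i l) = (firstOneFrom j r).elim 1 (failWeight p m n ·) := by
  cases h : firstOneFrom j r with
  | none =>
    have hfail : ∀ B, ¬HasTransversalFrom j (Fin.cons r B : Fin (m + 1) → _) := fun B hB => by
      obtain ⟨k, hjk, hr, -⟩ := hasTransversalFrom_cons_iff.1 hB
      simp [firstOneFrom_eq_none_iff.1 h k hjk] at hr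
    simp [hfail, sum_prod_prod_bernoulliWeight]
  | some k =>
    obtain ⟨hjk, hrk, hfirst⟩ := firstOneFrom_eq_some_iff.1 h
    have hiff : ∀ B, HasTransversalFrom j (Fin.cons r B : Fin (m + 1) → _) ↔
        HasTransversalFrom k B := by
      refine fun B => hasTransversalFrom_cons_iff.trans
        ⟨fun ⟨k', hjk', hrk', hB⟩ => hB.of_le (not_lt.1 fun hlt => ?_), fun hB => ⟨k, hjk, hrk, hB⟩⟩
      simp [hfirst k' hjk' hlt] at hrk'
    simp only [hiff, Option.elim]
    rfl

lemma failWeight_succ (m n j : ℕ) :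
    failWeight p (m + 1) n j = (1 - p) ^ (n - j) +
      ∑ k : Fin n with j ≤ k.val, (1 - p) ^ (k.val - j) * p * failWeight p m n k := by
  have hrow : failWeight p (m + 1) n j = ∑ r : Fin n → Bool,
      (∏ l, bernoulliWeight p (r l)) * (firstOneFrom j r).elim 1 (failWeight p m n ·) := by
    rw [failWeight, sum_filter, ← (Fin.consEquiv fun _ => Fin n → Bool).sum_comp,
      Fintype.sum_prod_type]
    refine sum_congr rfl fun r _ => ?_
    rw [← sum_not_hasTransversalFrom_cons, mul_sum, sum_filter]
    refine sum_congr rfl fun B _ => ?_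
    simp [Fin.consEquiv, Fin.prod_univ_succ]
  have hfiber : ∀ o : Option (Fin n),
      ∑ r with firstOneFrom j r = o,
        (∏ l, bernoulliWeight p (r l)) * (firstOneFrom j r).elim 1 (failWeight p m n ·) =
      (∑ r with firstOneFrom j r = o, ∏ l, bernoulliWeight p (r l)) *
        o.elim 1 (failWeight p m n ·) := by
    intro o
    rw [sum_mul]
    exact sum_congr rfl fun r hr => by rw [(mem_filter.1 hr).2]
  rw [hrow, ← sum_fiberwise univ (firstOneFrom j), Fintype.sum_option, hfiber,
    sum_firstOneFrom_eq_none, Option.elim_none, mul_one, sum_filter]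
  congr 1
  refine sum_congr rfl fun k _ => ?_
  split_ifs with hjk
  · rw [hfiber, sum_firstOneFrom_eq_some p hjk, Option.elim_some]
  · have hempty : ∑ r with firstOneFrom j r = some k, ∏ l, bernoulliWeight p (r l) = 0 :=
      sum_eq_zero fun r hr => absurd (firstOneFrom_eq_some_iff.1 (mem_filter.1 hr).2).1 hjk
    rw [hfiber, hempty, zero_mul]

end FailWeight

lemma failWeight_le {p a : ℝ} (hp0 : 0 ≤ p) (hp1 : p ≤ 1) (ha : 1 ≤ a) (hqa : (1 - p) * a < 1)
    (m n j : ℕ) :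
    failWeight p m n j ≤ (p / (1 - (1 - p) * a)) ^ m / a ^ (n - j) := by
  set x := (1 - p) * a
  set β := p / (1 - x)
  have hq : 0 ≤ 1 - p := sub_nonneg.2 hp1
  have ha0 : 0 < a := one_pos.trans_le ha
  have hx : 0 ≤ x := by positivity
  have hpβ : p = β * (1 - x) := (div_mul_cancel₀ p (sub_pos.2 hqa).ne').symm
  have hβ : 1 ≤ β := by
    rw [le_div_iff₀ (sub_pos.2 hqa)]
    nlinarith
  induction m generalizing j with
  | zero =>
    rw [failWeight_zero, pow_zero]
    positivity
  | succ m ih =>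
    set s := n - j
    have hterm : ∀ g ∈ range s, (1 - p) ^ (j + g - j) * p * (β ^ m / a ^ (n - (j + g))) =
        p * β ^ m * x ^ g / a ^ s := by
      intro g hg
      have : a ^ s = a ^ g * a ^ (n - (j + g)) := by
        rw [← pow_add]
        congr 1
        rw [mem_range] at hg
        omega
      rw [this, Nat.add_sub_cancel_left, mul_pow]
      field_simp
    calc failWeight p (m + 1) n j
        = (1 - p) ^ s +
            ∑ k : Fin n with j ≤ k.val, (1 - p) ^ (k.val - j) * p * failWeight p m n k :=
          failWeight_succ p m n j
      _ ≤ (1 - p) ^ s +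
            ∑ k : Fin n with j ≤ k.val, (1 - p) ^ (k.val - j) * p * (β ^ m / a ^ (n - k.val)) := by
          gcongr with k
          exact ih k
      _ = (x ^ s + β ^ m * (p * ∑ g ∈ range s, x ^ g)) / a ^ s := by
          rw [Fin.sum_filter_le_val n j fun k => (1 - p) ^ (k - j) * p * (β ^ m / a ^ (n - k)),
            sum_congr rfl hterm, ← sum_div, ← mul_sum, mul_pow, add_div]
          field_simp
      _ = (x ^ s + β ^ (m + 1) * (1 - x ^ s)) / a ^ s := by
          rw [hpβ, mul_assoc, mul_comm (1 - x), geom_sum_mul_neg]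
          ring
      _ ≤ β ^ (m + 1) / a ^ s := by
          gcongr
          nlinarith [one_le_pow₀ (n := m + 1) hβ, pow_nonneg hx s]

instance {m n : ℕ} {p : ℝ} (hp1 : p ≤ 1) :
    IsProbabilityMeasure (bernoulliMatrixMeasure m n p hp1) := by
  unfold bernoulliMatrixMeasure
  infer_instance

lemma toReal_bernoulliMatrixMeasure {m n : ℕ} {p : ℝ} (hp0 : 0 ≤ p) (hp1 : p ≤ 1)
    (S : Set (Fin m × Fin n → Bool)) :
    (bernoulliMatrixMeasure m n p hp1 S).toReal = ∑ A with A ∈ S, ∏ y, bernoulliWeight p (A y) := by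
  have hS : S = ↑({A | A ∈ S} : Finset _) := by ext; simp
  rw [hS, ← sum_measure_singleton, ENNReal.toReal_sum fun _ _ => measure_ne_top _ _, ← hS]
  refine sum_congr rfl fun A _ => ?_
  rw [← Set.univ_pi_singleton A, bernoulliMatrixMeasure, Measure.pi_pi, ENNReal.toReal_prod]
  refine prod_congr rfl fun y _ => ?_
  rw [PMF.toMeasure_apply_singleton _ _ (measurableSet_singleton _)]
  cases A y <;> simp [bernoulliWeight, PMF.bernoulli, hp0, hp1]

lemma toReal_bernoulliMatrixMeasure_pathLen_lt {m n : ℕ} {p : ℝ} (hp0 : 0 ≤ p) (hp1 : p ≤ 1) :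
    (bernoulliMatrixMeasure m n p hp1 {A | pathLen A < m}).toReal = failWeight p m n 0 := by
  rw [toReal_bernoulliMatrixMeasure hp0 hp1, failWeight, sum_filter, sum_filter]
  refine Fintype.sum_equiv (Equiv.curry _ _ _) _ _ fun A => ?_
  simp [pathLen_lt_iff, Fintype.prod_prod_type]

lemma toReal_bernoulliMatrixMeasure_pathLen_eq {m n : ℕ} {p : ℝ} (hp1 : p ≤ 1) :
    (bernoulliMatrixMeasure m n p hp1 {A | pathLen A = m}).toReal =
      1 - (bernoulliMatrixMeasure m n p hp1 {A | pathLen A < m}).toReal := by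
  have hcompl : {A : Fin m × Fin n → Bool | pathLen A = m} = {A | pathLen A < m}ᶜ := by
    ext A
    simpa using (pathLen_le A).ge_iff_eq.symm
  rw [hcompl]
  exact probReal_compl_eq_one_sub (Set.toFinite _).measurableSet

lemma toReal_bernoulliMatrixMeasure_pathLen_lt_le {p a ρ : ℝ} (hp0 : 0 < p) (hp1 : p ≤ 1)
    (ha : 1 ≤ a) (hqa : (1 - p) * a < 1) {m n : ℕ} (hn : ρ * m ≤ n) :
    (bernoulliMatrixMeasure m n p hp1 {A | pathLen A < m}).toReal ≤
      Real.exp (-(ρ * Real.log a - Real.log (p / (1 - (1 - p) * a))) * m) := by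
  set β := p / (1 - (1 - p) * a)
  have hexp : β ^ m / a ^ n = Real.exp (m * Real.log β - n * Real.log a) := by
    rw [Real.exp_sub, Real.exp_nat_mul, Real.exp_nat_mul,
      Real.exp_log (div_pos hp0 (sub_pos.2 hqa)), Real.exp_log (one_pos.trans_le ha)]
  rw [toReal_bernoulliMatrixMeasure_pathLen_lt hp0.le hp1]
  refine (failWeight_le hp0.le hp1 ha hqa m n 0).trans ?_
  rw [Nat.sub_zero, hexp, Real.exp_le_exp]
  nlinarith [Real.log_nonneg ha]

lemma exists_chernoff_parameter {p ε : ℝ} (hp0 : 0 < p) (hp1 : p < 1) (hε : 0 < ε) :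
    ∃ a : ℝ, 1 ≤ a ∧ (1 - p) * a < 1 ∧
      Real.log (p / (1 - (1 - p) * a)) < (1 + ε) * (1 / p - 1) * Real.log a := by
  have hq : 0 < 1 - p := sub_pos.2 hp1
  obtain ⟨c, hc, hcε⟩ : ∃ c, 0 < c ∧ c * ((1 + ε) * (1 - p) + p) < ε * p * (1 - p) := by
    refine ⟨ε * p * (1 - p) / (2 * ((1 + ε) * (1 - p) + p)), by positivity, ?_⟩
    rw [div_mul_eq_mul_div, div_lt_iff₀ (by positivity)]
    nlinarith [mul_pos (mul_pos hε hp0) hq, mul_pos (mul_pos hε hp0) hq]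
  have hcp : c < p := by nlinarith [mul_pos hε hq, mul_pos hc hq]
  -- For `a = 1 + c / (1 - p)` we get `log β ≤ c / (p - c)` and `c / (1 - p + c) ≤ log a`, and the
  -- condition on `c` is equivalent to `c / (p - c) < (1 + ε) (1 / p - 1) c / (1 - p + c)`.
  refine ⟨1 + c / (1 - p), by linarith [div_pos hc hq], ?_, ?_⟩
  · rw [mul_add, mul_one, mul_div_cancel₀ _ hq.ne']
    linarith
  · have hβ : 1 - (1 - p) * (1 + c / (1 - p)) = p - c := by field_simp; ring
    have hlogβ : Real.log (p / (p - c)) ≤ c / (p - c) := by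
      have := Real.log_le_sub_one_of_pos (div_pos hp0 (sub_pos.2 hcp))
      rwa [div_sub_one (sub_pos.2 hcp).ne', sub_sub_cancel] at this
    have hloga : c / (1 - p + c) ≤ Real.log (1 + c / (1 - p)) := by
      have h := Real.one_sub_inv_le_log_of_pos (by positivity : 0 < 1 + c / (1 - p))
      have : 1 - (1 + c / (1 - p))⁻¹ = c / (1 - p + c) := by field_simp; ring
      rwa [this] at h
    have hcompare : c / (p - c) < (1 + ε) * (1 / p - 1) * (c / (1 - p + c)) := by
      rw [div_lt_iff₀ (sub_pos.2 hcp)]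
      field_simp
      nlinarith
    have : 0 ≤ (1 + ε) * (1 / p - 1) := by
      have : 1 ≤ 1 / p := by rw [le_div_iff₀ hp0]; linarith
      nlinarith
    rw [hβ]
    nlinarith

/-- Deterministic regime: with `n_m = ⌈(1+ε)(1/p − 1)m⌉` and `A_m` a random `m × n_m`
matrix with i.i.d. Bernoulli(p) entries, there is `δ > 0` with
`Prob(L(A_m) < m) ≤ e^{−δm}` for all large `m`; in particular `Prob(L(A_m) = m) → 1`. -/
theorem deterministic_regime {p ε : ℝ} (hp0 : 0 < p) (hp1 : p < 1) (hε : 0 < ε) :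
    (∃ δ > (0 : ℝ), ∃ M : ℕ, ∀ m ≥ M,
      ((bernoulliMatrixMeasure m (⌈(1 + ε) * (1 / p - 1) * m⌉₊) p hp1.le)
          {A | pathLen A < m}).toReal ≤ Real.exp (-δ * m)) ∧
    Tendsto (fun m : ℕ =>
        ((bernoulliMatrixMeasure m (⌈(1 + ε) * (1 / p - 1) * m⌉₊) p hp1.le)
          {A | pathLen A = m}).toReal)
      atTop (𝓝 1) := by
  obtain ⟨a, ha, hqa, hlog⟩ := exists_chernoff_parameter hp0 hp1 hε
  set δ := (1 + ε) * (1 / p - 1) * Real.log a - Real.log (p / (1 - (1 - p) * a))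
  have hδ : 0 < δ := sub_pos.2 hlog
  have hbound : ∀ m : ℕ, ((bernoulliMatrixMeasure m (⌈(1 + ε) * (1 / p - 1) * m⌉₊) p hp1.le)
      {A | pathLen A < m}).toReal ≤ Real.exp (-δ * m) :=
    fun m => toReal_bernoulliMatrixMeasure_pathLen_lt_le hp0 hp1.le ha hqa (Nat.le_ceil _)
  have hexp : Tendsto (fun m : ℕ => Real.exp (-δ * m)) atTop (𝓝 0) := by
    simpa only [neg_mul, Function.comp_def] using Real.tendsto_exp_neg_atTop_nhds_zero.comp
      (tendsto_natCast_atTop_atTop.const_mul_atTop hδ)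
  refine ⟨⟨δ, hδ, 0, fun m _ => hbound m⟩, ?_⟩
  simp only [toReal_bernoulliMatrixMeasure_pathLen_eq]
  simpa using tendsto_const_nhds.sub (squeeze_zero (fun _ => ENNReal.toReal_nonneg) hbound hexp)
end

section
/- Let m, n ≥ 1, p ∈ (0,1), let A be a random m×n matrix with i.i.d. Bernoulli(p) entries, and let ξ_1, …, ξ_m be i.i.d. random variables with Prob(ξ_1 = i) = p(1−p)^i for i = 0,1,2,…. Then Prob(L(A) = m) = Prob(ξ_1 + ξ_2 + ⋯ + ξ_m < n), i.e. the probability that A contains an increasing path of full length m equals the probability that the geometric sum is less than n. -/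
/-!
In each row the greedy path takes the first `1` weakly to the right of the column chosen in the
previous row; it is the least full-length increasing path, so one exists iff the greedy path
exists. Indexing by the column increments `d₁, …, dₘ` of the greedy path (the first measured from
column `0`) splits the event into disjoint events, one for each `d` with `∑ dᵢ < n`, each asking
row `i` for `dᵢ` zeros followed by a one. Such an event has probability `∏ p (1 - p) ^ dᵢ`,
which is `Prob(ξ₁ = d₁, …, ξₘ = dₘ)`.
-/
open MeasureTheory
open scoped Classical

open Finset
open scoped ENNReal

section PathLength

variable {m n : ℕ} (A : Fin m × Fin n → Bool)

def increasingPathLengths : Set ℕ :=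
  {k | ∃ f : Fin k → Fin m × Fin n,
    (∀ i, A (f i) = true) ∧
    ∀ i j : Fin k, i < j → (f i).1 < (f j).1 ∧ (f i).2 ≤ (f j).2}

theorem pathLen_eq_sSup : pathLen A = sSup (increasingPathLengths A) := rfl

variable {A}

theorem le_of_mem_increasingPathLengths {k : ℕ} (hk : k ∈ increasingPathLengths A) : k ≤ m := by
  obtain ⟨f, -, hf⟩ := hk
  have hrows : StrictMono fun i => (f i).1 := fun i j hij => (hf i j hij).1
  simpa using Fintype.card_le_of_injective _ hrows.injective

theorem mem_increasingPathLengths_self_iff :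
    m ∈ increasingPathLengths A ↔ ∃ c : Fin m → Fin n, Monotone c ∧ ∀ i, A (i, c i) = true := by
  constructor
  · rintro ⟨f, hA, hf⟩
    have hrows : (fun i => (f i).1) = id := StrictMono.eq_id fun i j hij => (hf i j hij).1
    refine ⟨fun i => (f i).2, fun i j hij => ?_, fun i => ?_⟩
    · rcases hij.eq_or_lt with rfl | hlt
      exacts [le_rfl, (hf i j hlt).2]
    · convert hA i using 2
      exact Prod.ext (congrFun hrows i).symm rfl
  · rintro ⟨c, hc, hA⟩
    exact ⟨fun i => (i, c i), hA, fun i j hij => ⟨hij, hc hij.le⟩⟩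

theorem pathLen_eq_iff_exists_monotone :
    pathLen A = m ↔ ∃ c : Fin m → Fin n, Monotone c ∧ ∀ i, A (i, c i) = true := by
  have hbdd : BddAbove (increasingPathLengths A) :=
    ⟨m, fun _ hk => le_of_mem_increasingPathLengths hk⟩
  rw [← mem_increasingPathLengths_self_iff, pathLen_eq_sSup]
  constructor
  · intro h
    have hne : (increasingPathLengths A).Nonempty := ⟨0, fun i => i.elim0, fun i => i.elim0,
      fun i => i.elim0⟩
    simpa [h] using Nat.sSup_mem hne hbdd
  · intro h
    exact le_antisymm (csSup_le ⟨m, h⟩ fun _ hk => le_of_mem_increasingPathLengths hk)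
      (le_csSup hbdd h)

end PathLength

section PartialSum

variable {m : ℕ}

theorem Fin.partialSum_last {M : Type*} [AddCommMonoid M] (d : Fin m → M) :
    Fin.partialSum d (Fin.last m) = ∑ i, d i := by
  rw [Fin.partialSum, Fin.val_last, List.take_of_length_le (by simp), List.sum_ofFn]

theorem Fin.partialSum_injective {M : Type*} [AddMonoid M] [IsLeftCancelAdd M] :
    Function.Injective (Fin.partialSum : (Fin m → M) → Fin (m + 1) → M) := by
  intro d d' h
  funext i
  have := congrFun h i.succ
  rwa [Fin.partialSum_succ, Fin.partialSum_succ, congrFun h i.castSucc, add_left_cancel_iff]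
    at this

theorem Fin.monotone_partialSum (d : Fin m → ℕ) : Monotone (Fin.partialSum d) :=
  Fin.monotone_iff_le_succ.2 fun i => by simp [Fin.partialSum_succ]

theorem Fin.exists_partialSum_eq {g : Fin (m + 1) → ℕ} (hg : Monotone g) (h0 : g 0 = 0) :
    ∃ d : Fin m → ℕ, Fin.partialSum d = g := by
  refine ⟨fun i => g i.succ - g i.castSucc, funext fun j => ?_⟩
  induction j using Fin.induction with
  | zero => simp [h0]
  | succ i ih =>
    have := hg (Fin.castSucc_le_succ i)
    rw [Fin.partialSum_succ, ih]
    omega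

end PartialSum

section GreedyPath

theorem Monotone.update_of_le_of_le {α β : Type*} [LinearOrder α] [Preorder β] {c : α → β}
    (hc : Monotone c) {i : α} {x : β} (hleft : ∀ j < i, c j ≤ x) (hright : x ≤ c i) :
    Monotone (Function.update c i x) := by
  intro a b hab
  by_cases ha : a = i <;> by_cases hb : b = i
  · simp [ha, hb]
  · simpa [ha, hb] using hright.trans (hc (ha ▸ hab))
  · simpa [ha, hb] using hleft a (lt_of_le_of_ne (hb ▸ hab) ha)
  · simpa [ha, hb] using hc hab

variable {m n : ℕ} {A : Fin m × Fin n → Bool}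

/-- Full-length paths are closed under pointwise minimum; the least one is the greedy path. -/
theorem exists_greedy_path
    (h : ∃ c : Fin m → Fin n, Monotone c ∧ ∀ i, A (i, c i) = true) :
    ∃ c : Fin m → Fin n, Monotone c ∧ (∀ i, A (i, c i) = true) ∧
      ∀ i x, x < c i → (∀ j < i, c j ≤ x) → A (i, x) = false := by
  set paths := univ.filter fun c : Fin m → Fin n => Monotone c ∧ ∀ i, A (i, c i) = true
  have hne : paths.Nonempty := by simpa [paths, Finset.Nonempty] using h
  have hinf : ∀ c ∈ paths, ∀ c' ∈ paths, c ⊓ c' ∈ paths := by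
    simp only [paths, mem_filter, mem_univ, true_and]
    rintro c ⟨hc, hAc⟩ c' ⟨hc', hAc'⟩
    refine ⟨hc.inf hc', fun i => ?_⟩
    rcases le_total (c i) (c' i) with hi | hi
    · simpa [inf_of_le_left hi] using hAc i
    · simpa [inf_of_le_right hi] using hAc' i
  have hmem : paths.inf' hne id ∈ paths := Finset.inf'_mem (· ∈ paths) hinf _ hne id
    (fun c hc => hc)
  set c := paths.inf' hne id
  simp only [paths, mem_filter, mem_univ, true_and] at hmem
  refine ⟨c, hmem.1, hmem.2, fun i x hx hleft => ?_⟩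
  by_contra hAx
  have hupdate : Function.update c i x ∈ paths := by
    simp only [paths, mem_filter, mem_univ, true_and]
    refine ⟨hmem.1.update_of_le_of_le hleft hx.le, fun j => ?_⟩
    rcases eq_or_ne j i with rfl | hj
    · simpa using hAx
    · simpa [hj] using hmem.2 j
  have hle : c i ≤ x := by simpa using Finset.inf'_le id hupdate i
  exact hle.not_gt hx

end GreedyPath

section GreedyEvent

variable {m n : ℕ}

def greedyCell (lo hi x : ℕ) : Set Bool :=
  if x = hi then {true} else if lo ≤ x ∧ x < hi then {false} else Set.univ

theorem mem_greedyCell {lo hi x : ℕ} {b : Bool} :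
    b ∈ greedyCell lo hi x ↔ (x = hi → b = true) ∧ (lo ≤ x → x < hi → b = false) := by
  unfold greedyCell
  split_ifs <;> simp_all

/-- The event that the greedy path has column increments `d`, the first one measured from
column `0`: its columns are the partial sums `Fin.partialSum d i.succ`. -/
def greedyEvent (d : Fin m → ℕ) : Set (Fin m × Fin n → Bool) :=
  Set.univ.pi fun x =>
    greedyCell (Fin.partialSum d x.1.castSucc) (Fin.partialSum d x.1.succ) x.2

theorem mem_greedyEvent {d : Fin m → ℕ} {A : Fin m × Fin n → Bool} :
    A ∈ greedyEvent d ↔ ∀ i (x : Fin n),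
      ((x : ℕ) = Fin.partialSum d i.succ → A (i, x) = true) ∧
      (Fin.partialSum d i.castSucc ≤ x → (x : ℕ) < Fin.partialSum d i.succ → A (i, x) = false) := by
  simp [greedyEvent, mem_greedyCell, Prod.forall]

theorem measurableSet_greedyEvent (d : Fin m → ℕ) : MeasurableSet (greedyEvent (n := n) d) :=
  MeasurableSet.univ_pi fun _ => MeasurableSet.of_discrete

def vectorsSumLt (m n : ℕ) : Finset (Fin m → ℕ) :=
  (Fintype.piFinset fun _ => range n).filter fun d => ∑ i, d i < n

theorem mem_vectorsSumLt {d : Fin m → ℕ} : d ∈ vectorsSumLt m n ↔ ∑ i, d i < n := by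
  simp only [vectorsSumLt, mem_filter, Fintype.mem_piFinset, mem_range, and_iff_right_iff_imp]
  exact fun h i => (single_le_sum (fun j _ => Nat.zero_le (d j)) (mem_univ i)).trans_lt h

theorem partialSum_lt_of_mem_vectorsSumLt {d : Fin m → ℕ} (hd : d ∈ vectorsSumLt m n)
    (j : Fin (m + 1)) : Fin.partialSum d j < n :=
  (Fin.monotone_partialSum d (Fin.le_last j)).trans_lt
    ((Fin.partialSum_last d).symm ▸ mem_vectorsSumLt.1 hd)

theorem exists_mem_greedyEvent_of_greedy_path (hm : 0 < m) {A : Fin m × Fin n → Bool}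
    {c : Fin m → Fin n} (hc : Monotone c) (hA : ∀ i, A (i, c i) = true)
    (hgreedy : ∀ i x, x < c i → (∀ j < i, c j ≤ x) → A (i, x) = false) :
    ∃ d ∈ vectorsSumLt m n, A ∈ greedyEvent d := by
  set g : Fin (m + 1) → ℕ := Fin.cons 0 fun i => (c i : ℕ)
  have hg : Monotone g := by
    intro a b hab
    cases a using Fin.cases with
    | zero => simp [g]
    | succ a =>
      cases b using Fin.cases with
      | zero => exact absurd hab (by simp)
      | succ b => simpa [g] using hc (Fin.succ_le_succ_iff.1 hab)
  obtain ⟨d, hd⟩ := Fin.exists_partialSum_eq hg rfl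
  refine ⟨d, mem_vectorsSumLt.2 ?_, mem_greedyEvent.2 fun i x => ⟨fun hx => ?_, fun hlo hx => ?_⟩⟩
  · obtain ⟨k, rfl⟩ := Nat.exists_eq_add_of_lt hm
    simp [← Fin.partialSum_last, hd, g, ← Fin.succ_last]
  · obtain rfl : x = c i := Fin.ext (by simpa [hd, g] using hx)
    exact hA i
  · replace hx : x < c i := by rw [Fin.lt_def]; simpa [hd, g] using hx
    refine hgreedy i x hx fun j hji => ?_
    have hj : g j.succ ≤ g i.castSucc := hg (Fin.succ_le_castSucc_iff.2 hji)
    rw [hd] at hlo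
    simpa [g] using hj.trans hlo

theorem exists_monotone_iff_exists_mem_greedyEvent (hm : 0 < m) (A : Fin m × Fin n → Bool) :
    (∃ c : Fin m → Fin n, Monotone c ∧ ∀ i, A (i, c i) = true) ↔
      ∃ d ∈ vectorsSumLt m n, A ∈ greedyEvent d := by
  constructor
  · intro h
    obtain ⟨c, hc, hA, hgreedy⟩ := exists_greedy_path h
    exact exists_mem_greedyEvent_of_greedy_path hm hc hA hgreedy
  · rintro ⟨d, hd, hA⟩
    refine ⟨fun i => ⟨Fin.partialSum d i.succ, partialSum_lt_of_mem_vectorsSumLt hd _⟩,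
      fun i j hij => Fin.monotone_partialSum d (Fin.succ_le_succ_iff.2 hij), fun i => ?_⟩
    exact ((mem_greedyEvent.1 hA) i _).1 rfl

/-- Otherwise the event for `d'` would need a `0` where the event for `d` has its `1`. -/
theorem partialSum_succ_le_of_mem_greedyEvent {d d' : Fin m → ℕ} (hd : d ∈ vectorsSumLt m n)
    {A : Fin m × Fin n → Bool} (hA : A ∈ greedyEvent d) (hA' : A ∈ greedyEvent d') (i : Fin m)
    (hstart : Fin.partialSum d' i.castSucc ≤ Fin.partialSum d i.succ) :
    Fin.partialSum d' i.succ ≤ Fin.partialSum d i.succ := by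
  by_contra! hlt
  set x : Fin n := ⟨Fin.partialSum d i.succ, partialSum_lt_of_mem_vectorsSumLt hd _⟩
  have htrue := ((mem_greedyEvent.1 hA) i x).1 rfl
  have hfalse := ((mem_greedyEvent.1 hA') i x).2 hstart hlt
  simp [htrue] at hfalse

theorem pairwiseDisjoint_greedyEvent :
    (vectorsSumLt m n : Set (Fin m → ℕ)).PairwiseDisjoint (greedyEvent (n := n)) := by
  intro d hd d' hd' hne
  refine Set.disjoint_left.2 fun A hA hA' => hne (Fin.partialSum_injective (funext fun j => ?_))
  induction j using Fin.induction with
  | zero => simp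
  | succ i ih =>
    have hle := Fin.monotone_partialSum d (Fin.castSucc_le_succ i)
    have hle' := Fin.monotone_partialSum d' (Fin.castSucc_le_succ i)
    exact le_antisymm
      (partialSum_succ_le_of_mem_greedyEvent hd' hA' hA i (ih ▸ hle'))
      (partialSum_succ_le_of_mem_greedyEvent hd hA hA' i (ih ▸ hle))

end GreedyEvent

section Measure

variable {m n : ℕ}

theorem prod_measure_greedyCell (β : Measure Bool) [IsProbabilityMeasure β] {lo hi : ℕ}
    (hlo : lo ≤ hi) (hn : hi < n) :
    ∏ x : Fin n, β (greedyCell lo hi x) = β {false} ^ (hi - lo) * β {true} := by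
  rw [Fin.prod_univ_eq_prod_range (fun x => β (greedyCell lo hi x)) n,
    ← prod_subset (s₁ := Ico lo (hi + 1)) (fun x hx => by simp at hx ⊢; omega)
      (fun x _ hx => by
        rw [mem_Ico] at hx
        rw [greedyCell, if_neg (by omega), if_neg (by omega), measure_univ]),
    prod_Ico_succ_top hlo, prod_congr rfl (g := fun _ => β {false}) (fun x hx => ?_),
    prod_const, Nat.card_Ico]
  · simp [greedyCell]
  · simp only [mem_Ico] at hx
    simp [greedyCell, hx.1, hx.2, hx.2.ne]

theorem measure_pi_greedyEvent (β : Measure Bool) [IsProbabilityMeasure β] {d : Fin m → ℕ}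
    (hd : d ∈ vectorsSumLt m n) :
    Measure.pi (fun _ : Fin m × Fin n => β) (greedyEvent d) = ∏ i, β {false} ^ d i * β {true} := by
  rw [greedyEvent, Measure.pi_pi, Fintype.prod_prod_type]
  refine prod_congr rfl fun i _ => ?_
  rw [prod_measure_greedyCell β (Fin.monotone_partialSum d (Fin.castSucc_le_succ i))
    (partialSum_lt_of_mem_vectorsSumLt hd _), Fin.partialSum_succ, add_tsub_cancel_left]

theorem bernoulliMatrixMeasure_greedyEvent {p : ℝ} (hp0 : 0 ≤ p) (hp1 : p ≤ 1)
    {d : Fin m → ℕ} (hd : d ∈ vectorsSumLt m n) :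
    bernoulliMatrixMeasure m n p hp1 (greedyEvent d) =
      ∏ i, ENNReal.ofReal (p * (1 - p) ^ d i) := by
  set β := (PMF.bernoulli (Real.toNNReal p) (Real.toNNReal_le_one.mpr hp1)).toMeasure
  have htrue : β {true} = ENNReal.ofReal p := by
    simp [β, PMF.bernoulli_apply, ENNReal.ofReal]
  have hfalse : β {false} = ENNReal.ofReal (1 - p) := by
    rw [ENNReal.ofReal_sub 1 hp0, ENNReal.ofReal_one]
    simp [β, PMF.bernoulli_apply, ENNReal.ofReal]
  rw [bernoulliMatrixMeasure, measure_pi_greedyEvent β hd]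
  refine prod_congr rfl fun i _ => ?_
  rw [htrue, hfalse, ENNReal.ofReal_mul hp0, ENNReal.ofReal_pow (by linarith), mul_comm]

theorem bernoulliMatrixMeasure_pathLen_eq_sum (hm : 0 < m) {p : ℝ} (hp0 : 0 ≤ p) (hp1 : p ≤ 1) :
    bernoulliMatrixMeasure m n p hp1 {A | pathLen A = m} =
      ∑ d ∈ vectorsSumLt m n, ∏ i, ENNReal.ofReal (p * (1 - p) ^ d i) := by
  have hunion : {A : Fin m × Fin n → Bool | pathLen A = m} =
      ⋃ d ∈ vectorsSumLt m n, greedyEvent d := by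
    ext A
    simp [pathLen_eq_iff_exists_monotone, exists_monotone_iff_exists_mem_greedyEvent hm]
  rw [hunion, measure_biUnion_finset pairwiseDisjoint_greedyEvent
    fun d _ => measurableSet_greedyEvent d]
  exact sum_congr rfl fun d hd => bernoulliMatrixMeasure_greedyEvent hp0 hp1 hd

end Measure

section Cylinder

variable {m : ℕ} {μ : Measure (ℕ → ℕ)} {w : ℕ → ℝ≥0∞}

theorem measure_firstCoords_mem_eq_sum
    (hμ : ∀ f : ℕ → ℕ, μ {ω | ∀ i ∈ range m, ω i = f i} = ∏ i ∈ range m, w (f i))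
    (T : Finset (Fin m → ℕ)) :
    μ {ω | (fun i : Fin m => ω i) ∈ T} = ∑ d ∈ T, ∏ i, w (d i) := by
  have hmeas : Measurable fun (ω : ℕ → ℕ) (i : Fin m) => ω i := by fun_prop
  change μ ((fun (ω : ℕ → ℕ) (i : Fin m) => ω i) ⁻¹' T) = _
  rw [← sum_measure_preimage_singleton T fun d _ => hmeas (measurableSet_singleton d)]
  refine sum_congr rfl fun d _ => ?_
  set f : ℕ → ℕ := fun k => if h : k < m then d ⟨k, h⟩ else 0
  have hfiber : (fun (ω : ℕ → ℕ) (i : Fin m) => ω i) ⁻¹' {d} =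
      {ω | ∀ i ∈ range m, ω i = f i} := by
    ext ω
    simp +contextual [f, funext_iff, Fin.forall_iff]
  rw [hfiber, hμ, ← Fin.prod_univ_eq_prod_range (fun k => w (f k))]
  simp [f]

theorem measure_sum_range_lt_eq_sum {n : ℕ}
    (hμ : ∀ f : ℕ → ℕ, μ {ω | ∀ i ∈ range m, ω i = f i} = ∏ i ∈ range m, w (f i)) :
    μ {ω | ∑ i ∈ range m, ω i < n} = ∑ d ∈ vectorsSumLt m n, ∏ i, w (d i) := by
  rw [← measure_firstCoords_mem_eq_sum hμ]
  congr with ω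
  simp [mem_vectorsSumLt, Fin.sum_univ_eq_sum_range]

end Cylinder

theorem prob_full_path_eq_geometric_sum_general (m n : ℕ) (hm : 1 ≤ m)
    {p : ℝ} (hp0 : 0 < p) (hp1 : p < 1)
    (μ : Measure (ℕ → ℕ))
    (hμ : ∀ (S : Finset ℕ) (f : ℕ → ℕ),
      μ {ω | ∀ i ∈ S, ω i = f i} = ∏ i ∈ S, ENNReal.ofReal (p * (1 - p) ^ f i)) :
    (bernoulliMatrixMeasure m n p hp1.le) {A | pathLen A = m} =
      μ {ω | ∑ i ∈ Finset.range m, ω i < n} := by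
  rw [bernoulliMatrixMeasure_pathLen_eq_sum hm hp0.le,
    measure_sum_range_lt_eq_sum (w := fun k => ENNReal.ofReal (p * (1 - p) ^ k)) (hμ (range m))]

/-- The probability that a random `m × n` matrix with i.i.d. Bernoulli(p) entries has an
increasing path of full length `m` equals the probability that the sum of `m` i.i.d.
geometric random variables (`Prob(ξ = i) = p(1−p)^i`) is less than `n`. -/
theorem prob_full_path_eq_geometric_sum (m n : ℕ) (hm : 1 ≤ m) (hn : 1 ≤ n)
    {p : ℝ} (hp0 : 0 < p) (hp1 : p < 1)
    (μ : Measure (ℕ → ℕ)) [IsProbabilityMeasure μ]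
    (hμ : ∀ (S : Finset ℕ) (f : ℕ → ℕ),
      μ {ω | ∀ i ∈ S, ω i = f i} = ∏ i ∈ S, ENNReal.ofReal (p * (1 - p) ^ f i)) :
    (bernoulliMatrixMeasure m n p hp1.le) {A | pathLen A = m} =
      μ {ω | ∑ i ∈ Finset.range m, ω i < n} :=
  prob_full_path_eq_geometric_sum_general m n hm hp0 hp1 μ hμ
end

section
/- Let m, n ≥ 1 and q = (q_1,…,q_n) ∈ (0,1)^n, and let A(q) be a random m×n matrix whose entries are independent, with every entry in column j equal to 1 with probability q_j and 0 with probability 1 − q_j. Then for every permutation σ of {1,…,n} and every integer h ≥ 0, Prob(L(A(q)) ≤ h) = Prob(L(A(q∘σ)) ≤ h); i.e., the distribution of the longest increasing path is a symmetric function of the column probabilities (q_1,…,q_n). -/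
open MeasureTheory
open scoped Classical

/-- The distribution of a random `m × n` 0-1 matrix with independent entries, the
entries in column `j` being 1 with probability `q j`. -/
noncomputable def colBernoulliMatrixMeasure (m n : ℕ) (q : Fin n → ℝ)
    (hq : ∀ j, q j ≤ 1) : Measure (Fin m × Fin n → Bool) :=
  Measure.pi fun idx =>
    (PMF.bernoulli (Real.toNNReal (q idx.2))
      (Real.toNNReal_le_one.mpr (hq idx.2))).toMeasure

/-!
For two columns `a, b` and a window of rows `[u, v)`, the longest increasing path inside them is
`max_w (#ones of a in [u, w) + #ones of b in [w, v))`. An increasing path of the matrix meets the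
adjacent columns `c, c + 1` in such a window, between its parts to the left and to the right, so
`L(A)` does not decrease when these two columns are replaced by a pair whose window maxima are
at least as large.

The crystal operators act on a pair of columns by flipping one row: lowering turns the row
`(1, 0)` just before the first maximum of the running excess `#a - #b` into `(0, 1)`, and
raising undoes it. Both preserve every window maximum. Iterated `|#a - #b|` times they give the
Lascoux–Schützenberger involution, which therefore preserves `L` and exchanges the numbers of
ones of the two columns. The law of `A(q)` weighs a column only through its number of ones, so
this involution carries `A(q)` to `A(q ∘ (c c+1))`; adjacent transpositions generate the
symmetric group.
-/

open Finset

namespace ODB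

variable {m n : ℕ}

def countOnes (a : Fin m → Bool) (u w : ℕ) : ℕ :=
  #{x : Fin m | u ≤ x ∧ x < w ∧ a x = true}

lemma countOnes_add (a : Fin m → Bool) {u w v : ℕ} (huw : u ≤ w) (hwv : w ≤ v) :
    countOnes a u w + countOnes a w v = countOnes a u v := by
  rw [countOnes, countOnes, countOnes, ← card_union_of_disjoint]
  · congr 1; ext x
    cases h : a x
    · simp only [mem_union, mem_filter, mem_univ, h, Bool.false_eq_true, and_false, or_self]
    · simp only [mem_union, mem_filter, mem_univ, true_and, and_true, h]; omega
  · simp only [disjoint_left, mem_filter, mem_univ, true_and]; omega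

lemma countOnes_update_true (a : Fin m → Bool) (r : Fin m) (u w : ℕ) :
    countOnes (Function.update a r true) u w =
      countOnes (Function.update a r false) u w + if u ≤ r ∧ r < w then 1 else 0 := by
  simp only [countOnes]
  split_ifs with hr
  · rw [← card_insert_of_notMem (s := filter _ _) (a := r) (by simp)]
    congr 1; ext x
    by_cases hx : x = r <;> simp [hx, Function.update_of_ne, hr]
  · rw [add_zero]; congr 1; ext x
    by_cases hx : x = r <;> simp [hx, Function.update_of_ne, hr]

lemma countOnes_update_false_add {a : Fin m → Bool} {r : Fin m} (ha : a r = true) (u w : ℕ) :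
    countOnes (Function.update a r false) u w + (if u ≤ r ∧ r < w then 1 else 0) =
      countOnes a u w := by
  rw [← countOnes_update_true, ← ha, Function.update_eq_self]

lemma countOnes_update_true_of_eq_false {a : Fin m → Bool} {r : Fin m} (ha : a r = false)
    (u w : ℕ) :
    countOnes (Function.update a r true) u w =
      countOnes a u w + if u ≤ r ∧ r < w then 1 else 0 := by
  rw [countOnes_update_true, ← ha, Function.update_eq_self]

lemma countOnes_succ (a : Fin m → Bool) (r : Fin m) :
    countOnes a r (r + 1) = (a r).toNat := by
  rw [countOnes]
  cases ha : a r
  · simp only [Bool.toNat_false, card_eq_zero, filter_eq_empty_iff, mem_univ, true_implies]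
    intro x hx
    obtain rfl : x = r := Fin.ext (by omega)
    simp_all
  · rw [Bool.toNat_true, card_eq_one]
    refine ⟨r, ?_⟩
    ext x
    simp only [mem_filter, mem_univ, true_and, mem_singleton]
    constructor
    · rintro ⟨h1, h2, -⟩; exact Fin.ext (by omega)
    · rintro rfl; simp [ha]

lemma countOnes_zero_of_le (a : Fin m → Bool) {w : ℕ} (hw : m ≤ w) :
    countOnes a 0 w = #{x | a x = true} := by
  rw [countOnes]; congr 1; ext x
  simp only [mem_filter, mem_univ, true_and]
  have := x.isLt
  constructor
  · exact fun h => h.2.2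
  · exact fun h => ⟨by omega, by omega, h⟩

abbrev ColumnPair (m : ℕ) := (Fin m → Bool) × (Fin m → Bool)

section

variable (p : ColumnPair m)

def pairPathLen (u v : ℕ) : ℕ :=
  (Icc u v).sup fun w => countOnes p.1 u w + countOnes p.2 w v

lemma le_pairPathLen {u w v : ℕ} (hw : w ∈ Icc u v) :
    countOnes p.1 u w + countOnes p.2 w v ≤ pairPathLen p u v :=
  le_sup (f := fun w => countOnes p.1 u w + countOnes p.2 w v) hw

def excess (t : ℕ) : ℤ := countOnes p.1 0 t - countOnes p.2 0 t

lemma countOnes_add_countOnes {u w v : ℕ} (huw : u ≤ w) (hwv : w ≤ v) :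
    (countOnes p.1 u w + countOnes p.2 w v : ℤ) =
      countOnes p.2 u v + excess p w - excess p u := by
  have := countOnes_add p.1 (Nat.zero_le u) huw
  have := countOnes_add p.2 (Nat.zero_le u) huw
  have := countOnes_add p.2 huw hwv
  rw [excess, excess]
  omega

lemma excess_zero : excess p 0 = 0 := by
  simp [excess, countOnes]

lemma excess_succ (r : Fin m) :
    excess p (r + 1) = excess p r + (p.1 r).toNat - (p.2 r).toNat := by
  have h1 := countOnes_add p.1 (Nat.zero_le r) (Nat.le_succ r)
  have h2 := countOnes_add p.2 (Nat.zero_le r) (Nat.le_succ r)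
  rw [countOnes_succ] at h1 h2
  rw [excess, excess, ← h1, ← h2]
  push_cast
  ring

def flipDown (r : Fin m) : ColumnPair m :=
  (Function.update p.1 r false, Function.update p.2 r true)

def flipUp (r : Fin m) : ColumnPair m :=
  (Function.update p.1 r true, Function.update p.2 r false)

lemma excess_flipUp (r : Fin m) (t : ℕ) :
    excess (flipUp p r) t = excess (flipDown p r) t + if r < t then 2 else 0 := by
  simp only [excess, flipUp, flipDown, countOnes_update_true p.1 r 0 t]
  have := countOnes_update_true p.2 r 0 t
  split_ifs at this ⊢ <;> push_cast at this ⊢ <;> omega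

lemma flipUp_flipDown (r : Fin m) : flipUp (flipDown p r) r = flipUp p r := by
  simp [flipUp, flipDown]

lemma flipDown_flipUp (r : Fin m) : flipDown (flipUp p r) r = flipDown p r := by
  simp [flipUp, flipDown]

lemma flipUp_eq_self {r : Fin m} (h1 : p.1 r = true) (h2 : p.2 r = false) : flipUp p r = p := by
  rw [flipUp, ← h1, ← h2, Function.update_eq_self, Function.update_eq_self]

lemma flipDown_eq_self {r : Fin m} (h1 : p.1 r = false) (h2 : p.2 r = true) :
    flipDown p r = p := by
  rw [flipDown, ← h1, ← h2, Function.update_eq_self, Function.update_eq_self]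

def maxExcess : ℤ := (range (m + 1)).sup' nonempty_range_add_one (excess p)

lemma excess_le_maxExcess {t : ℕ} (ht : t ≤ m) : excess p t ≤ maxExcess p :=
  le_sup' (excess p) (mem_range_succ_iff.2 ht)

lemma exists_excess_eq_maxExcess : ∃ t ≤ m, excess p t = maxExcess p := by
  obtain ⟨t, ht, h⟩ := exists_mem_eq_sup' nonempty_range_add_one (excess p)
  exact ⟨t, mem_range_succ_iff.1 ht, h.symm⟩

lemma maxExcess_nonneg : 0 ≤ maxExcess p :=
  excess_zero p ▸ excess_le_maxExcess p (Nat.zero_le m)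

def IsLowerRow (r : Fin m) : Prop :=
  (∀ t ≤ m, excess p t ≤ excess p (r + 1)) ∧
    ∀ t : ℕ, t ≤ r → excess p t < excess p (r + 1)

def IsRaiseRow (r : Fin m) : Prop :=
  (∀ t ≤ m, excess p t ≤ excess p r) ∧ ∀ t ≤ m, r < t → excess p t < excess p r

end

section

variable {p : ColumnPair m} {r : Fin m}

lemma excess_succ_eq_add_one (h1 : p.1 r = true) (h2 : p.2 r = false) :
    excess p (r + 1) = excess p r + 1 := by
  simp [excess_succ, h1, h2]

lemma excess_succ_eq_sub_one (h1 : p.1 r = false) (h2 : p.2 r = true) :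
    excess p (r + 1) = excess p r - 1 := by
  simp [excess_succ, h1, h2]

lemma apply_of_excess_lt_excess_succ (h : excess p r < excess p (r + 1)) :
    p.1 r = true ∧ p.2 r = false := by
  have hs := excess_succ p r
  cases h1 : p.1 r <;> cases h2 : p.2 r <;>
    simp only [h1, h2, Bool.toNat_true, Bool.toNat_false, Bool.false_eq_true, false_and,
      and_self, Nat.cast_zero, Nat.cast_one] at hs ⊢ <;> omega

lemma apply_of_excess_succ_lt_excess (h : excess p (r + 1) < excess p r) :
    p.1 r = false ∧ p.2 r = true := by
  have hs := excess_succ p r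
  cases h1 : p.1 r <;> cases h2 : p.2 r <;>
    simp only [h1, h2, Bool.toNat_true, Bool.toNat_false, Bool.false_eq_true, and_false,
      and_self, Nat.cast_zero, Nat.cast_one] at hs ⊢ <;> omega

lemma IsLowerRow.apply (h : IsLowerRow p r) : p.1 r = true ∧ p.2 r = false :=
  apply_of_excess_lt_excess_succ (h.2 r le_rfl)

lemma IsRaiseRow.apply (h : IsRaiseRow p r) : p.1 r = false ∧ p.2 r = true :=
  apply_of_excess_succ_lt_excess (h.2 (r + 1) r.isLt (Nat.lt_succ_self r))

lemma IsLowerRow.le {r' : Fin m} (h : IsLowerRow p r) (h' : IsLowerRow p r') : r ≤ r' := by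
  by_contra hlt
  have := h.2 (r' + 1) (by simp at hlt; omega)
  have := h'.1 ((r : ℕ) + 1) r.isLt
  omega

lemma IsRaiseRow.le {r' : Fin m} (h : IsRaiseRow p r) (h' : IsRaiseRow p r') : r ≤ r' := by
  by_contra hlt
  have := h'.2 r r.isLt.le (by simpa using hlt)
  have := h.1 r' r'.isLt.le
  omega

lemma IsLowerRow.maxExcess_eq (h : IsLowerRow p r) :
    maxExcess p = excess p (r + 1) :=
  le_antisymm (sup'_le _ _ fun t ht => h.1 t (mem_range_succ_iff.1 ht))
    (excess_le_maxExcess p r.isLt)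

lemma IsRaiseRow.maxExcess_eq (h : IsRaiseRow p r) : maxExcess p = excess p r :=
  le_antisymm (sup'_le _ _ fun t ht => h.1 t (mem_range_succ_iff.1 ht))
    (excess_le_maxExcess p r.isLt.le)

lemma IsLowerRow.one_le_maxExcess (h : IsLowerRow p r) : 1 ≤ maxExcess p := by
  have := h.2 0 (Nat.zero_le r)
  rw [excess_zero] at this
  rw [h.maxExcess_eq]
  omega

lemma exists_isLowerRow (hM : 1 ≤ maxExcess p) : ∃ r, IsLowerRow p r := by
  have hex := exists_excess_eq_maxExcess p
  obtain ⟨htm, hmax⟩ := Nat.find_spec hex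
  have hpos : Nat.find hex ≠ 0 := fun h0 => by
    rw [h0, excess_zero] at hmax
    omega
  refine ⟨⟨Nat.find hex - 1, by omega⟩, fun t ht => ?_, fun t ht => ?_⟩ <;>
    simp only [Nat.sub_add_cancel (Nat.pos_of_ne_zero hpos), hmax]
  · exact excess_le_maxExcess p ht
  · have hne := Nat.find_min hex (show t < Nat.find hex by simp at ht; omega)
    have := excess_le_maxExcess p (show t ≤ m by omega)
    exact lt_of_le_of_ne this fun h => hne ⟨by omega, h⟩

lemma exists_isRaiseRow (hE : excess p m < maxExcess p) : ∃ r, IsRaiseRow p r := by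
  set t₀ := Nat.findGreatest (fun t => excess p t = maxExcess p) m
  obtain ⟨t, htm, ht⟩ := exists_excess_eq_maxExcess p
  have hmax : excess p t₀ = maxExcess p :=
    Nat.findGreatest_spec (P := fun t => excess p t = maxExcess p) htm ht
  have hlt : t₀ < m := lt_of_le_of_ne (Nat.findGreatest_le m) fun h => by
    rw [h] at hmax
    omega
  refine ⟨⟨t₀, hlt⟩, fun t ht => ?_, fun t ht hrt => ?_⟩ <;> simp only [hmax]
  · exact excess_le_maxExcess p ht
  · exact lt_of_le_of_ne (excess_le_maxExcess p ht) (Nat.findGreatest_is_greatest hrt ht)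

lemma excess_eq_excess_flipDown_add (h1 : p.1 r = true) (h2 : p.2 r = false) (t : ℕ) :
    excess p t = excess (flipDown p r) t + if r < t then 2 else 0 := by
  rw [← excess_flipUp, flipUp_eq_self p h1 h2]

lemma excess_flipUp_eq_add (h1 : p.1 r = false) (h2 : p.2 r = true) (t : ℕ) :
    excess (flipUp p r) t = excess p t + if r < t then 2 else 0 := by
  rw [excess_flipUp, flipDown_eq_self p h1 h2]

lemma IsLowerRow.isRaiseRow_flipDown (h : IsLowerRow p r) : IsRaiseRow (flipDown p r) r := by
  obtain ⟨h1, h2⟩ := h.apply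
  have he := excess_eq_excess_flipDown_add h1 h2
  have hr := he r
  have hstep := excess_succ_eq_add_one h1 h2
  rw [if_neg (lt_irrefl _)] at hr
  refine ⟨fun t ht => ?_, fun t ht hrt => ?_⟩
  · have het := he t
    have := h.1 t ht
    split_ifs at het with hrt
    · omega
    · have := h.2 t (by omega)
      omega
  · have het := he t
    have := h.1 t ht
    rw [if_pos hrt] at het
    omega

lemma IsRaiseRow.isLowerRow_flipUp (h : IsRaiseRow p r) : IsLowerRow (flipUp p r) r := by
  obtain ⟨h1, h2⟩ := h.apply
  have he := excess_flipUp_eq_add h1 h2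
  have hr := he (r + 1)
  have hstep := excess_succ_eq_sub_one h1 h2
  rw [if_pos (Nat.lt_succ_self r)] at hr
  refine ⟨fun t ht => ?_, fun t ht => ?_⟩
  · have het := he t
    have := h.1 t ht
    split_ifs at het with hrt
    · have := h.2 t ht hrt
      omega
    · omega
  · have het := he t
    have := h.1 t (by omega)
    rw [if_neg (by omega)] at het
    omega

/-- On a window containing `r`, the best split point moves from `r + 1` to `r`. -/
lemma IsLowerRow.pairPathLen_flipDown (h : IsLowerRow p r) {u v : ℕ} (hv : v ≤ m) :
    pairPathLen (flipDown p r) u v = pairPathLen p u v := by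
  obtain ⟨h1, h2⟩ := h.apply
  set s := fun w => countOnes p.1 u w + countOnes p.2 w v
  set s' := fun w => countOnes (flipDown p r).1 u w + countOnes (flipDown p r).2 w v
  have hss' (w : ℕ) :
      s' w + (if u ≤ r ∧ r < w then 1 else 0) = s w + if w ≤ r ∧ r < v then 1 else 0 := by
    have := countOnes_update_false_add h1 u w
    have := countOnes_update_true_of_eq_false h2 w v
    simp only [s, s', flipDown]
    omega
  change (Icc u v).sup s' = (Icc u v).sup s
  by_cases hr : u ≤ r ∧ r < v
  · have hs (w : ℕ) (hw : w ∈ Icc u v) :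
        (s w : ℤ) + excess p u = countOnes p.2 u v + excess p w := by
      have := countOnes_add_countOnes p (mem_Icc.1 hw).1 (mem_Icc.1 hw).2
      simp only [s]
      push_cast
      linarith
    have hr1 : (r : ℕ) + 1 ∈ Icc u v := mem_Icc.2 ⟨by omega, hr.2⟩
    have hr0 : (r : ℕ) ∈ Icc u v := mem_Icc.2 ⟨hr.1, hr.2.le⟩
    have hstep := excess_succ_eq_add_one h1 h2
    apply le_antisymm
    · refine Finset.sup_le fun w hw => le_trans ?_ (le_sup hr1)
      have hw' := hss' w
      have hr1' := hss' (r + 1)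
      rw [if_pos ⟨hr.1, by omega⟩, if_neg (by omega)] at hr1'
      have := hs w hw
      have := hs _ hr1
      have := h.1 w ((mem_Icc.1 hw).2.trans hv)
      by_cases hwr : w ≤ r
      · rw [if_neg (by omega), if_pos ⟨hwr, hr.2⟩] at hw'
        have := h.2 w hwr
        omega
      · rw [if_pos ⟨hr.1, by omega⟩, if_neg (by omega)] at hw'
        omega
    · refine Finset.sup_le fun w hw => le_trans ?_ (le_sup (f := s') hr0)
      have hr' := hss' r
      rw [if_neg (by omega), if_pos ⟨le_rfl, hr.2⟩] at hr'
      have := hs w hw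
      have := hs _ hr0
      have := h.1 w ((mem_Icc.1 hw).2.trans hv)
      omega
  · refine sup_congr rfl fun w hw => ?_
    have := mem_Icc.1 hw
    have := hss' w
    split_ifs at this <;> omega

noncomputable def lower (p : ColumnPair m) : ColumnPair m :=
  if h : ∃ r, IsLowerRow p r then flipDown p h.choose else p

noncomputable def raise (p : ColumnPair m) : ColumnPair m :=
  if h : ∃ r, IsRaiseRow p r then flipUp p h.choose else p

lemma IsLowerRow.lower_eq (h : IsLowerRow p r) : lower p = flipDown p r := by
  have hex : ∃ r, IsLowerRow p r := ⟨r, h⟩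
  rw [lower, dif_pos hex, le_antisymm (hex.choose_spec.le h) (h.le hex.choose_spec)]

lemma IsRaiseRow.raise_eq (h : IsRaiseRow p r) : raise p = flipUp p r := by
  have hex : ∃ r, IsRaiseRow p r := ⟨r, h⟩
  rw [raise, dif_pos hex, le_antisymm (hex.choose_spec.le h) (h.le hex.choose_spec)]

lemma IsLowerRow.raise_lower (h : IsLowerRow p r) : raise (lower p) = p := by
  rw [h.lower_eq, h.isRaiseRow_flipDown.raise_eq, flipUp_flipDown,
    flipUp_eq_self p h.apply.1 h.apply.2]

lemma IsRaiseRow.lower_raise (h : IsRaiseRow p r) : lower (raise p) = p := by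
  rw [h.raise_eq, h.isLowerRow_flipUp.lower_eq, flipDown_flipUp,
    flipDown_eq_self p h.apply.1 h.apply.2]

lemma maxExcess_lower (hM : 1 ≤ maxExcess p) : maxExcess (lower p) = maxExcess p - 1 := by
  obtain ⟨r, h⟩ := exists_isLowerRow hM
  have hstep := excess_succ_eq_add_one h.apply.1 h.apply.2
  have hr := excess_eq_excess_flipDown_add h.apply.1 h.apply.2 r
  rw [if_neg (lt_irrefl _)] at hr
  rw [h.lower_eq, h.isRaiseRow_flipDown.maxExcess_eq, h.maxExcess_eq]
  omega

lemma pairPathLen_lower (hM : 1 ≤ maxExcess p) {u v : ℕ} (hv : v ≤ m) :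
    pairPathLen (lower p) u v = pairPathLen p u v := by
  obtain ⟨r, h⟩ := exists_isLowerRow hM
  rw [h.lower_eq, h.pairPathLen_flipDown hv]

lemma countOnes_lower (hM : 1 ≤ maxExcess p) :
    countOnes (lower p).1 0 m + 1 = countOnes p.1 0 m ∧
      countOnes (lower p).2 0 m = countOnes p.2 0 m + 1 := by
  obtain ⟨r, h⟩ := exists_isLowerRow hM
  have hr : 0 ≤ (r : ℕ) ∧ (r : ℕ) < m := ⟨Nat.zero_le _, r.isLt⟩
  rw [h.lower_eq, flipDown]
  exact ⟨by simpa [hr] using countOnes_update_false_add h.apply.1 0 m,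
    by simpa [hr] using countOnes_update_true_of_eq_false h.apply.2 0 m⟩

lemma raise_lower (hM : 1 ≤ maxExcess p) : raise (lower p) = p :=
  (exists_isLowerRow hM).choose_spec.raise_lower

lemma one_le_maxExcess_raise (hE : excess p m < maxExcess p) : 1 ≤ maxExcess (raise p) := by
  obtain ⟨r, h⟩ := exists_isRaiseRow hE
  rw [h.raise_eq]
  exact h.isLowerRow_flipUp.one_le_maxExcess

lemma lower_raise (hE : excess p m < maxExcess p) : lower (raise p) = p :=
  (exists_isRaiseRow hE).choose_spec.lower_raise

lemma maxExcess_raise (hE : excess p m < maxExcess p) :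
    maxExcess (raise p) = maxExcess p + 1 := by
  have := maxExcess_lower (one_le_maxExcess_raise hE)
  rw [lower_raise hE] at this
  omega

lemma excess_raise (hE : excess p m < maxExcess p) : excess (raise p) m = excess p m + 2 := by
  have := countOnes_lower (one_le_maxExcess_raise hE)
  rw [lower_raise hE] at this
  simp only [excess]
  omega

end

section

variable {p : ColumnPair m} {k : ℕ}

lemma maxExcess_lower_iterate (hk : (k : ℤ) ≤ maxExcess p) :
    maxExcess (lower^[k] p) = maxExcess p - k := by
  induction k with
  | zero => simp
  | succ k ih =>
    have ih := ih (by omega)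
    rw [Function.iterate_succ_apply', maxExcess_lower (by omega), ih]
    push_cast
    ring

lemma pairPathLen_lower_iterate (hk : (k : ℤ) ≤ maxExcess p) {u v : ℕ} (hv : v ≤ m) :
    pairPathLen (lower^[k] p) u v = pairPathLen p u v := by
  induction k with
  | zero => rfl
  | succ k ih =>
    have hM := maxExcess_lower_iterate (p := p) (k := k) (by omega)
    rw [Function.iterate_succ_apply', pairPathLen_lower (by omega) hv, ih (by omega)]

lemma countOnes_lower_iterate (hk : (k : ℤ) ≤ maxExcess p) :
    countOnes (lower^[k] p).1 0 m + k = countOnes p.1 0 m ∧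
      countOnes (lower^[k] p).2 0 m = countOnes p.2 0 m + k := by
  induction k with
  | zero => simp
  | succ k ih =>
    have hM := maxExcess_lower_iterate (p := p) (k := k) (by omega)
    have ih := ih (by omega)
    have := countOnes_lower (p := lower^[k] p) (by omega)
    rw [Function.iterate_succ_apply']
    omega

lemma raise_iterate_lower_iterate (hk : (k : ℤ) ≤ maxExcess p) :
    raise^[k] (lower^[k] p) = p := by
  induction k with
  | zero => rfl
  | succ k ih =>
    have hM := maxExcess_lower_iterate (p := p) (k := k) (by omega)
    rw [Function.iterate_succ_apply, Function.iterate_succ_apply', raise_lower (by omega),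
      ih (by omega)]

lemma maxExcess_and_excess_raise_iterate (hk : (k : ℤ) ≤ maxExcess p - excess p m) :
    maxExcess (raise^[k] p) = maxExcess p + k ∧ excess (raise^[k] p) m = excess p m + 2 * k := by
  induction k with
  | zero => simp
  | succ k ih =>
    obtain ⟨hM, hE⟩ := ih (by omega)
    have hlt : excess (raise^[k] p) m < maxExcess (raise^[k] p) := by omega
    rw [Function.iterate_succ_apply', maxExcess_raise hlt, excess_raise hlt, hM, hE]
    push_cast
    constructor <;> ring

lemma lower_iterate_raise_iterate (hk : (k : ℤ) ≤ maxExcess p - excess p m) :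
    lower^[k] (raise^[k] p) = p := by
  induction k with
  | zero => rfl
  | succ k ih =>
    obtain ⟨hM, hE⟩ := maxExcess_and_excess_raise_iterate (p := p) (k := k) (by omega)
    rw [Function.iterate_succ_apply, Function.iterate_succ_apply', lower_raise (by omega),
      ih (by omega)]

noncomputable def reflect (p : ColumnPair m) : ColumnPair m :=
  if 0 ≤ excess p m then lower^[(excess p m).toNat] p else raise^[(-excess p m).toNat] p

lemma reflect_of_nonneg (hp : 0 ≤ excess p m) : reflect p = lower^[(excess p m).toNat] p :=
  if_pos hp

lemma countOnes_lower_iterate_excess (hp : 0 ≤ excess p m) :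
    countOnes (lower^[(excess p m).toNat] p).1 0 m = countOnes p.2 0 m ∧
      countOnes (lower^[(excess p m).toNat] p).2 0 m = countOnes p.1 0 m := by
  have hk := Int.toNat_of_nonneg hp
  have := countOnes_lower_iterate (p := p) (k := (excess p m).toNat)
    (hk ▸ excess_le_maxExcess p le_rfl)
  have hE : excess p m = countOnes p.1 0 m - countOnes p.2 0 m := rfl
  omega

lemma reflect_lower_iterate (hp : 0 ≤ excess p m) :
    reflect (lower^[(excess p m).toNat] p) = p := by
  have hk := Int.toNat_of_nonneg hp
  rcases hp.eq_or_lt with h0 | hpos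
  · have hk0 : (excess p m).toNat = 0 := by omega
    rw [hk0, Function.iterate_zero_apply, reflect_of_nonneg hp, hk0, Function.iterate_zero_apply]
  · have hc := countOnes_lower_iterate_excess hp
    have hE : excess p m = countOnes p.1 0 m - countOnes p.2 0 m := rfl
    have hE' : excess (lower^[(excess p m).toNat] p) m =
      countOnes (lower^[(excess p m).toNat] p).1 0 m -
        countOnes (lower^[(excess p m).toNat] p).2 0 m := rfl
    have hneg : ¬ 0 ≤ excess (lower^[(excess p m).toNat] p) m := by omega
    have hk' : (-excess (lower^[(excess p m).toNat] p) m).toNat = (excess p m).toNat := by omega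
    rw [reflect, if_neg hneg, hk',
      raise_iterate_lower_iterate (hk ▸ excess_le_maxExcess p le_rfl)]

lemma exists_eq_or_eq_lower_iterate (p : ColumnPair m) :
    ∃ q : ColumnPair m, 0 ≤ excess q m ∧ (p = q ∨ p = lower^[(excess q m).toNat] q) := by
  by_cases hp : 0 ≤ excess p m
  · exact ⟨p, hp, Or.inl rfl⟩
  · set k := (-excess p m).toNat
    have hk : (k : ℤ) ≤ maxExcess p - excess p m := by
      have := maxExcess_nonneg p; omega
    obtain ⟨-, hE⟩ := maxExcess_and_excess_raise_iterate hk
    have hkE : (excess (raise^[k] p) m).toNat = k := by omega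
    exact ⟨raise^[k] p, by omega, Or.inr (by rw [hkE, lower_iterate_raise_iterate hk])⟩

lemma reflect_reflect (p : ColumnPair m) : reflect (reflect p) = p := by
  obtain ⟨q, hq, rfl | rfl⟩ := exists_eq_or_eq_lower_iterate p
  · rw [reflect_of_nonneg hq, reflect_lower_iterate hq]
  · rw [reflect_lower_iterate hq, reflect_of_nonneg hq]

lemma pairPathLen_reflect (p : ColumnPair m) {u v : ℕ} (hv : v ≤ m) :
    pairPathLen (reflect p) u v = pairPathLen p u v := by
  obtain ⟨q, hq, hpq⟩ := exists_eq_or_eq_lower_iterate p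
  have hk : ((excess q m).toNat : ℤ) ≤ maxExcess q :=
    (Int.toNat_of_nonneg hq) ▸ excess_le_maxExcess q le_rfl
  rcases hpq with rfl | rfl
  · rw [reflect_of_nonneg hq, pairPathLen_lower_iterate hk hv]
  · rw [reflect_lower_iterate hq, pairPathLen_lower_iterate hk hv]

lemma countOnes_reflect (p : ColumnPair m) :
    countOnes (reflect p).1 0 m = countOnes p.2 0 m ∧
      countOnes (reflect p).2 0 m = countOnes p.1 0 m := by
  obtain ⟨q, hq, rfl | rfl⟩ := exists_eq_or_eq_lower_iterate p
  · rw [reflect_of_nonneg hq]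
    exact countOnes_lower_iterate_excess hq
  · rw [reflect_lower_iterate hq]
    exact (countOnes_lower_iterate_excess hq).symm.imp Eq.symm Eq.symm

end

def PathLt (x y : Fin m × Fin n) : Prop := x.1 < y.1 ∧ x.2 ≤ y.2

def IsIncreasingPath (A : Fin m × Fin n → Bool) (S : Finset (Fin m × Fin n)) : Prop :=
  (∀ x ∈ S, A x = true) ∧ IsChain PathLt (S : Set (Fin m × Fin n))

lemma pathLt_of_isChain_of_snd_lt {S : Set (Fin m × Fin n)} (hS : IsChain PathLt S) {x y}
    (hx : x ∈ S) (hy : y ∈ S) (hxy : x.2 < y.2) : PathLt x y :=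
  (hS hx hy (by rintro rfl; exact lt_irrefl _ hxy)).resolve_right fun h => h.2.not_gt hxy

lemma injOn_fst_of_isChain {S : Set (Fin m × Fin n)} (hS : IsChain PathLt S) :
    S.InjOn Prod.fst := by
  intro x hx y hy hxy
  by_contra hne
  rcases hS hx hy hne with h | h
  · exact h.1.ne hxy
  · exact h.1.ne hxy.symm

lemma isChain_of_snd_eq {S : Set (Fin m × Fin n)} {j : Fin n} (hS : ∀ x ∈ S, x.2 = j) :
    IsChain PathLt S := by
  intro x hx y hy hne
  have hcol : x.2 = y.2 := (hS x hx).trans (hS y hy).symm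
  have hrow : x.1 ≠ y.1 := fun h => hne (Prod.ext h hcol)
  rcases hrow.lt_or_gt with h | h
  · exact Or.inl ⟨h, hcol.le⟩
  · exact Or.inr ⟨h, hcol.ge⟩

lemma card_le_of_isChain {S : Finset (Fin m × Fin n)}
    (hS : IsChain PathLt (S : Set (Fin m × Fin n))) :
    #S ≤ m := by
  simpa using card_le_card_of_injOn Prod.fst (fun x _ => mem_univ x.1) (injOn_fst_of_isChain hS)

lemma exists_enum_of_isIncreasingPath {A : Fin m × Fin n → Bool} {S : Finset (Fin m × Fin n)}
    (hS : IsIncreasingPath A S) :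
    ∃ f : Fin #S → Fin m × Fin n, (∀ i, A (f i) = true) ∧
      ∀ i j, i < j → (f i).1 < (f j).1 ∧ (f i).2 ≤ (f j).2 := by
  have hcard : #(S.image Prod.fst) = #S := card_image_of_injOn (injOn_fst_of_isChain hS.2)
  set e := (S.image Prod.fst).orderEmbOfFin hcard
  have hmem (i : Fin #S) : ∃ x ∈ S, x.1 = e i := mem_image.1 (orderEmbOfFin_mem _ hcard i)
  choose f hfS hfe using hmem
  refine ⟨f, fun i => hS.1 _ (hfS i), fun i j hij => ?_⟩
  have hrow : (f i).1 < (f j).1 := by rw [hfe, hfe]; exact e.strictMono hij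
  rcases hS.2 (hfS i) (hfS j) (fun h => hrow.ne (congrArg Prod.fst h)) with h | h
  · exact h
  · exact absurd h.1 hrow.not_gt

lemma isIncreasingPath_image {A : Fin m × Fin n → Bool} {k : ℕ} {f : Fin k → Fin m × Fin n}
    (hf1 : ∀ i, A (f i) = true)
    (hf2 : ∀ i j, i < j → (f i).1 < (f j).1 ∧ (f i).2 ≤ (f j).2) :
    IsIncreasingPath A (univ.image f) ∧ #(univ.image f) = k := by
  have hlt {i j : Fin k} (hij : i ≠ j) : PathLt (f i) (f j) ∨ PathLt (f j) (f i) :=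
    (Ne.lt_or_gt hij).imp (hf2 i j) (hf2 j i)
  have hinj : Function.Injective f := fun i j hij => by
    by_contra hne
    rcases hlt hne with h | h
    exacts [h.1.ne (congrArg Prod.fst hij), h.1.ne (congrArg Prod.fst hij.symm)]
  refine ⟨⟨?_, ?_⟩, by simp [card_image_of_injective _ hinj]⟩
  · simpa using hf1
  · simp only [coe_image, coe_univ, Set.image_univ]
    rintro _ ⟨i, rfl⟩ _ ⟨j, rfl⟩ hne
    exact hlt fun h => hne (h ▸ rfl)

lemma pathLen_le_iff (A : Fin m × Fin n → Bool) (h : ℕ) :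
    pathLen A ≤ h ↔ ∀ S, IsIncreasingPath A S → #S ≤ h := by
  set K := {k | ∃ f : Fin k → Fin m × Fin n, (∀ i, A (f i) = true) ∧
    ∀ i j : Fin k, i < j → (f i).1 < (f j).1 ∧ (f i).2 ≤ (f j).2}
  have hK (k : ℕ) : k ∈ K ↔ ∃ S, IsIncreasingPath A S ∧ #S = k := by
    constructor
    · rintro ⟨f, hf1, hf2⟩
      exact ⟨_, isIncreasingPath_image hf1 hf2⟩
    · rintro ⟨S, hS, rfl⟩
      exact exists_enum_of_isIncreasingPath hS
  have hbdd : BddAbove K := ⟨m, fun k hk => by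
    obtain ⟨S, hS, rfl⟩ := (hK k).1 hk
    exact card_le_of_isChain hS.2⟩
  rw [pathLen, csSup_le_iff hbdd ⟨0, (hK 0).2 ⟨∅, by simp [IsIncreasingPath]⟩⟩]
  constructor
  · exact fun H S hS => H _ ((hK _).2 ⟨S, hS, rfl⟩)
  · rintro H k hk
    obtain ⟨S, hS, rfl⟩ := (hK k).1 hk
    exact H S hS

def columnPair (A : Fin m × Fin n → Bool) (c c' : Fin n) : ColumnPair m :=
  (fun i => A (i, c), fun i => A (i, c'))

lemma card_le_countOnes {A : Fin m × Fin n → Bool} {j : Fin n} {u w : ℕ}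
    {S : Finset (Fin m × Fin n)} (hS : Set.InjOn Prod.fst (S : Set (Fin m × Fin n)))
    (hmem : ∀ x ∈ S, x.2 = j ∧ A x = true ∧ u ≤ x.1 ∧ x.1 < w) :
    #S ≤ countOnes (fun i => A (i, j)) u w := by
  refine card_le_card_of_injOn Prod.fst (fun x hx => ?_) hS
  obtain ⟨rfl, hA, hu, hw⟩ := hmem x hx
  exact mem_filter.2 ⟨mem_univ _, hu, hw, hA⟩

lemma card_le_pairPathLen {A : Fin m × Fin n → Bool} {c c' : Fin n} (hcc : c < c') {u v : ℕ}
    {S : Finset (Fin m × Fin n)} (hS : IsIncreasingPath A S)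
    (hmem : ∀ x ∈ S, (x.2 = c ∨ x.2 = c') ∧ u ≤ x.1 ∧ x.1 < v) :
    #S ≤ pairPathLen (columnPair A c c') u v := by
  rcases S.eq_empty_or_nonempty with rfl | ⟨x₀, hx₀⟩
  · exact Nat.zero_le _
  set Sc := S.filter (·.2 = c)
  set Sc' := S.filter (¬ ·.2 = c)
  set w := u ⊔ Sc.sup fun x => (x.1 : ℕ) + 1
  have hw : w ∈ Icc u v := by
    have := (hmem x₀ hx₀).2
    refine mem_Icc.2 ⟨le_sup_left, sup_le (by omega) (Finset.sup_le fun x hx => ?_)⟩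
    exact (hmem x (mem_filter.1 hx).1).2.2
  have hinj : Set.InjOn Prod.fst (S : Set (Fin m × Fin n)) := injOn_fst_of_isChain hS.2
  have hc : #Sc ≤ countOnes (columnPair A c c').1 u w := by
    refine card_le_countOnes (hinj.mono (filter_subset _ _)) fun x hx => ?_
    obtain ⟨hxS, hxc⟩ := mem_filter.1 hx
    refine ⟨hxc, hS.1 x hxS, (hmem x hxS).2.1, ?_⟩
    have : (x.1 : ℕ) + 1 ≤ Sc.sup fun x => (x.1 : ℕ) + 1 :=
      le_sup (f := fun x => (x.1 : ℕ) + 1) hx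
    omega
  have hc' : #Sc' ≤ countOnes (columnPair A c c').2 w v := by
    refine card_le_countOnes (hinj.mono (filter_subset _ _)) fun y hy => ?_
    obtain ⟨hyS, hyc⟩ := mem_filter.1 hy
    have hyc' : y.2 = c' := (hmem y hyS).1.resolve_left hyc
    refine ⟨hyc', hS.1 y hyS, sup_le (hmem y hyS).2.1 (Finset.sup_le fun x hx => ?_),
      (hmem y hyS).2.2⟩
    obtain ⟨hxS, hxc⟩ := mem_filter.1 hx
    exact (pathLt_of_isChain_of_snd_lt hS.2 hxS hyS (by rw [hxc, hyc']; exact hcc)).1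
  calc #S = #Sc + #Sc' := (card_filter_add_card_filter_not _).symm
    _ ≤ countOnes (columnPair A c c').1 u w + countOnes (columnPair A c c').2 w v :=
      add_le_add hc hc'
    _ ≤ pairPathLen (columnPair A c c') u v := le_pairPathLen _ hw

lemma exists_isIncreasingPath_pairPathLen_le (A : Fin m × Fin n → Bool) {c c' : Fin n}
    (hcc : c ≤ c') (u v : ℕ) :
    ∃ S, IsIncreasingPath A S ∧
      (∀ x ∈ S, (x.2 = c ∨ x.2 = c') ∧ u ≤ x.1 ∧ x.1 < v) ∧
      pairPathLen (columnPair A c c') u v ≤ #S := by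
  rcases lt_or_ge v u with hvu | huv
  · refine ⟨∅, by simp [IsIncreasingPath], by simp, ?_⟩
    simp [pairPathLen, Icc_eq_empty_of_lt hvu]
  obtain ⟨w, hw, hmax⟩ := exists_mem_eq_sup (Icc u v) ⟨u, mem_Icc.2 ⟨le_rfl, huv⟩⟩
    fun w => countOnes (columnPair A c c').1 u w + countOnes (columnPair A c c').2 w v
  obtain ⟨huw, hwv⟩ := mem_Icc.1 hw
  set Sc := (univ.filter fun i : Fin m => u ≤ i ∧ i < w ∧ A (i, c) = true).image (·, c)
  set Sc' := (univ.filter fun i : Fin m => w ≤ i ∧ i < v ∧ A (i, c') = true).image (·, c')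
  have hSc : ∀ x ∈ Sc, x.2 = c ∧ A x = true ∧ u ≤ x.1 ∧ x.1 < w := by
    simp only [Sc, mem_image, mem_filter, mem_univ, true_and]
    rintro _ ⟨i, ⟨hu, hw, hA⟩, rfl⟩
    exact ⟨rfl, hA, hu, hw⟩
  have hSc' : ∀ x ∈ Sc', x.2 = c' ∧ A x = true ∧ w ≤ x.1 ∧ x.1 < v := by
    simp only [Sc', mem_image, mem_filter, mem_univ, true_and]
    rintro _ ⟨i, ⟨hw, hv, hA⟩, rfl⟩
    exact ⟨rfl, hA, hw, hv⟩
  have hdisj : Disjoint Sc Sc' := disjoint_left.2 fun x hx hx' => by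
    have := (hSc x hx).2.2.2
    have := (hSc' x hx').2.2.1
    omega
  refine ⟨Sc ∪ Sc', ⟨?_, ?_⟩, ?_, ?_⟩
  · intro x hx
    rcases mem_union.1 hx with hx | hx
    exacts [(hSc x hx).2.1, (hSc' x hx).2.1]
  · rw [coe_union, isChain_union]
    refine ⟨isChain_of_snd_eq fun x hx => (hSc x hx).1,
      isChain_of_snd_eq fun x hx => (hSc' x hx).1,
      fun x hx y hy _ => Or.inl ⟨?_, ?_⟩⟩
    · have := (hSc x hx).2.2.2
      have := (hSc' y hy).2.2.1
      exact Fin.lt_def.2 (by omega)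
    · rw [(hSc x hx).1, (hSc' y hy).1]
      exact hcc
  · intro x hx
    rcases mem_union.1 hx with hx | hx
    · obtain ⟨hc, -, hu, hw⟩ := hSc x hx
      exact ⟨Or.inl hc, hu, by omega⟩
    · obtain ⟨hc, -, hw, hv⟩ := hSc' x hx
      exact ⟨Or.inr hc, by omega, hv⟩
  · rw [card_union_of_disjoint hdisj, card_image_of_injective _ (Prod.mk_left_injective c),
      card_image_of_injective _ (Prod.mk_left_injective c'), pairPathLen, hmax]
    rfl

lemma IsIncreasingPath.mono {A : Fin m × Fin n → Bool} {S P : Finset (Fin m × Fin n)}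
    (hS : IsIncreasingPath A S) (hPS : P ⊆ S) : IsIncreasingPath A P :=
  ⟨fun x hx => hS.1 x (hPS hx), hS.2.mono (coe_subset.2 hPS)⟩

lemma isIncreasingPath_union {A : Fin m × Fin n → Bool} {S T : Finset (Fin m × Fin n)}
    (hS : IsIncreasingPath A S) (hT : IsIncreasingPath A T)
    (hST : ∀ x ∈ S, ∀ y ∈ T, PathLt x y) :
    IsIncreasingPath A (S ∪ T) ∧ #(S ∪ T) = #S + #T := by
  refine ⟨⟨fun x hx => ?_, ?_⟩, card_union_of_disjoint ?_⟩
  · rcases mem_union.1 hx with hx | hx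
    exacts [hS.1 x hx, hT.1 x hx]
  · rw [coe_union, isChain_union]
    exact ⟨hS.2, hT.2, fun x hx y hy _ => Or.inl (hST x hx y hy)⟩
  · exact disjoint_left.2 fun x hx hx' => (hST x hx x hx').1.false

lemma exists_row_window {S : Finset (Fin m × Fin n)}
    (hS : IsChain PathLt (S : Set (Fin m × Fin n))) (c c' : Fin n) :
    ∃ u v : ℕ, v ≤ m ∧ (∀ x ∈ S, x.2 < c → x.1 < u) ∧
      (∀ y ∈ S, c ≤ y.2 → y.2 ≤ c' → u ≤ y.1 ∧ y.1 < v) ∧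
      ∀ z ∈ S, c' < z.2 → v ≤ z.1 := by
  set R := S.filter (c' < ·.2)
  have hrow {x y} (hx : x ∈ S) (hy : y ∈ S) (hxy : x.2 < y.2) : x.1 < y.1 :=
    (pathLt_of_isChain_of_snd_lt hS hx hy hxy).1
  obtain ⟨v, hvm, hMv, hRv⟩ : ∃ v ≤ m,
      (∀ y ∈ S, y.2 ≤ c' → (y.1 : ℕ) < v) ∧ ∀ z ∈ R, v ≤ z.1 := by
    rcases R.eq_empty_or_nonempty with hRe | ⟨z₀, hz₀⟩
    · exact ⟨m, le_rfl, fun y _ _ => y.1.isLt, by simp [hRe]⟩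
    · refine ⟨R.inf' ⟨z₀, hz₀⟩ fun z => (z.1 : ℕ),
        (inf'_le _ hz₀).trans z₀.1.isLt.le,
        fun y hy hyc => (lt_inf'_iff _).2 fun z hz => ?_, fun z hz => inf'_le _ hz⟩
      exact hrow hy (mem_filter.1 hz).1 (hyc.trans_lt (mem_filter.1 hz).2)
  refine ⟨(S.filter (·.2 < c)).sup fun x => (x.1 : ℕ) + 1, v, hvm,
    fun x hx hxc => le_sup (f := fun x => (x.1 : ℕ) + 1) (mem_filter.2 ⟨hx, hxc⟩),
    fun y hy hcy hyc => ⟨Finset.sup_le fun x hx => ?_, hMv y hy hyc⟩,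
    fun z hz hcz => hRv z (mem_filter.2 ⟨hz, hcz⟩)⟩
  exact hrow (mem_filter.1 hx).1 hy ((mem_filter.1 hx).2.trans_le hcy)

/-- The part of the path in columns `c, c'` is replaced by a longest two-column path of `A`
through the same rows. -/
theorem exists_isIncreasingPath_card_le {A A' : Fin m × Fin n → Bool} {c c' : Fin n}
    (hcc : c ⋖ c') (hoff : ∀ x : Fin m × Fin n, x.2 ≠ c → x.2 ≠ c' → A' x = A x)
    (hpair : ∀ u v, v ≤ m →
      pairPathLen (columnPair A' c c') u v ≤ pairPathLen (columnPair A c c') u v)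
    {S' : Finset (Fin m × Fin n)} (hS' : IsIncreasingPath A' S') :
    ∃ S, IsIncreasingPath A S ∧ #S' ≤ #S := by
  set L := S'.filter (·.2 < c)
  set M := S'.filter fun x => x.2 = c ∨ x.2 = c'
  set R := S'.filter (c' < ·.2)
  have hL (x) (hx : x ∈ L) := mem_filter.1 hx
  have hM (x) (hx : x ∈ M) := mem_filter.1 hx
  have hR (x) (hx : x ∈ R) := mem_filter.1 hx
  have hsub : S' ⊆ L ∪ M ∪ R := fun x hx => by
    simp only [L, M, R, mem_union, mem_filter, hx, true_and]
    by_contra! h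
    exact hcc.2 (lt_of_le_of_ne h.1.1 (Ne.symm h.1.2.1)) (lt_of_le_of_ne h.2 h.1.2.2)
  have hpath (P) (hP : P ⊆ S') (hoffP : ∀ x ∈ P, x.2 ≠ c ∧ x.2 ≠ c') :
      IsIncreasingPath A P :=
    ⟨fun x hx => hoff x (hoffP x hx).1 (hoffP x hx).2 ▸ hS'.1 x (hP hx), (hS'.mono hP).2⟩
  obtain ⟨u, v, hvm, hLu, hMuv, hRv⟩ := exists_row_window hS'.2 c c'
  have hMuv' (y) (hy : y ∈ M) : u ≤ y.1 ∧ y.1 < v := by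
    rcases (hM y hy).2 with h | h
    exacts [hMuv y (hM y hy).1 h.ge (h ▸ hcc.1.le), hMuv y (hM y hy).1 (h ▸ hcc.1.le) h.le]
  obtain ⟨T, hT, hTmem, hTcard⟩ := exists_isIncreasingPath_pairPathLen_le A hcc.1.le u v
  have hMT : #M ≤ #T :=
    (card_le_pairPathLen hcc.1 (hS'.mono (filter_subset _ _))
      fun y hy => ⟨(hM y hy).2, hMuv' y hy⟩).trans ((hpair u v hvm).trans hTcard)
  have hTc (t) (ht : t ∈ T) : c ≤ t.2 ∧ t.2 ≤ c' := by
    rcases (hTmem t ht).1 with h | h <;> rw [h]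
    exacts [⟨le_rfl, hcc.1.le⟩, ⟨hcc.1.le, le_rfl⟩]
  obtain ⟨hLT, hLTcard⟩ := isIncreasingPath_union
    (hpath L (filter_subset _ _) fun x hx => ⟨(hL x hx).2.ne, ((hL x hx).2.trans hcc.1).ne⟩) hT
    fun x hx t ht => ⟨Fin.lt_def.2 ((hLu x (hL x hx).1 (hL x hx).2).trans_le (hTmem t ht).2.1),
      ((hL x hx).2.trans_le (hTc t ht).1).le⟩
  obtain ⟨hLTR, hLTRcard⟩ := isIncreasingPath_union hLT
    (hpath R (filter_subset _ _) fun z hz => ⟨(hcc.1.trans (hR z hz).2).ne', (hR z hz).2.ne'⟩)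
    fun x hx z hz => by
      rcases mem_union.1 hx with hx | ht
      · exact pathLt_of_isChain_of_snd_lt hS'.2 (hL x hx).1 (hR z hz).1
          (((hL x hx).2.trans hcc.1).trans (hR z hz).2)
      · exact ⟨Fin.lt_def.2 ((hTmem x ht).2.2.trans_le (hRv z (hR z hz).1 (hR z hz).2)),
          (hTc x ht).2.trans (hR z hz).2.le⟩
  refine ⟨L ∪ T ∪ R, hLTR, ?_⟩
  calc #S' ≤ #(L ∪ M ∪ R) := card_le_card hsub
    _ ≤ #L + #M + #R := (card_union_le _ _).trans (by gcongr; exact card_union_le _ _)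
    _ ≤ #L + #T + #R := by gcongr
    _ = #(L ∪ T ∪ R) := by rw [hLTRcard, hLTcard]

noncomputable def reflectColumns (A : Fin m × Fin n → Bool) (c c' : Fin n) :
    Fin m × Fin n → Bool :=
  fun x => if x.2 = c then (reflect (columnPair A c c')).1 x.1
    else if x.2 = c' then (reflect (columnPair A c c')).2 x.1 else A x

section

variable {A : Fin m × Fin n → Bool} {c c' : Fin n}

lemma columnPair_reflectColumns (hcc : c ≠ c') :
    columnPair (reflectColumns A c c') c c' = reflect (columnPair A c c') := by
  simp [columnPair, reflectColumns, hcc.symm]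

lemma reflectColumns_involutive (hcc : c ≠ c') :
    Function.Involutive (reflectColumns (m := m) · c c') := by
  intro B
  funext x
  change reflectColumns (reflectColumns B c c') c c' x = B x
  rw [reflectColumns, columnPair_reflectColumns hcc, reflect_reflect]
  split_ifs with h h'
  · rw [← h]; rfl
  · rw [← h']; rfl
  · simp [reflectColumns, h, h']

lemma pathLen_le_pathLen {A' : Fin m × Fin n → Bool} (hcc : c ⋖ c')
    (hoff : ∀ x : Fin m × Fin n, x.2 ≠ c → x.2 ≠ c' → A' x = A x)
    (hpair : ∀ u v, v ≤ m →
      pairPathLen (columnPair A' c c') u v ≤ pairPathLen (columnPair A c c') u v) :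
    pathLen A' ≤ pathLen A := by
  refine (pathLen_le_iff A' _).2 fun S' hS' => ?_
  obtain ⟨S, hS, hle⟩ := exists_isIncreasingPath_card_le hcc hoff hpair hS'
  exact hle.trans ((pathLen_le_iff A _).1 le_rfl S hS)

lemma pathLen_reflectColumns (hcc : c ⋖ c') (A : Fin m × Fin n → Bool) :
    pathLen (reflectColumns A c c') = pathLen A := by
  have hoff (x : Fin m × Fin n) (h : x.2 ≠ c) (h' : x.2 ≠ c') :
      reflectColumns A c c' x = A x := by
    simp [reflectColumns, h, h']
  have hpair (u v : ℕ) (hv : v ≤ m) :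
      pairPathLen (columnPair (reflectColumns A c c') c c') u v =
        pairPathLen (columnPair A c c') u v := by
    rw [columnPair_reflectColumns hcc.ne]
    exact pairPathLen_reflect (columnPair A c c') (u := u) hv
  exact le_antisymm (pathLen_le_pathLen hcc hoff fun u v hv => (hpair u v hv).le)
    (pathLen_le_pathLen hcc (fun x h h' => (hoff x h h').symm) fun u v hv => (hpair u v hv).ge)

lemma card_filter_eq_of_card_filter_true_eq {a a' : Fin m → Bool}
    (h : #{i | a i = true} = #{i | a' i = true}) (b : Bool) :
    #{i | a i = b} = #{i | a' i = b} := by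
  cases b
  · have h₁ := card_filter_add_card_filter_not (s := univ) (p := fun i => a i = true)
    have h₂ := card_filter_add_card_filter_not (s := univ) (p := fun i => a' i = true)
    simp only [Bool.not_eq_true] at h₁ h₂
    omega
  · exact h

lemma card_reflectColumns_swap (hcc : c ≠ c') (j : Fin n) (b : Bool) :
    #{i | reflectColumns A c c' (i, Equiv.swap c c' j) = b} = #{i | A (i, j) = b} := by
  refine card_filter_eq_of_card_filter_true_eq ?_ b
  have hcount := countOnes_reflect (columnPair A c c')
  simp only [countOnes_zero_of_le _ le_rfl] at hcount
  by_cases hjc : j = c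
  · subst hjc
    rw [Equiv.swap_apply_left]
    show #{i | (columnPair (reflectColumns A j c') j c').2 i = true} = _
    rw [columnPair_reflectColumns hcc]
    exact hcount.2
  by_cases hjc' : j = c'
  · subst hjc'
    rw [Equiv.swap_apply_right]
    show #{i | (columnPair (reflectColumns A c j) c j).1 i = true} = _
    rw [columnPair_reflectColumns hcc]
    exact hcount.1
  · simp [Equiv.swap_apply_of_ne_of_ne hjc hjc', reflectColumns, hjc, hjc']

end

lemma prod_comp_eq_prod_pow_card {ι α M : Type*} [Fintype ι] [Fintype α] [DecidableEq α]
    [CommMonoid M] (a : ι → α) (f : α → M) :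
    ∏ i, f (a i) = ∏ b, f b ^ #{i | a i = b} := by
  rw [← prod_fiberwise univ a]
  refine prod_congr rfl fun b _ => ?_
  rw [prod_congr rfl fun i hi => by rw [(mem_filter.1 hi).2], prod_const]

section

variable {α : Type*} [Fintype α] [DecidableEq α] [MeasurableSpace α] (ν : Fin n → Measure α)
  [∀ j, SigmaFinite (ν j)]

lemma pi_snd_singleton (A : Fin m × Fin n → α) :
    Measure.pi (fun x : Fin m × Fin n => ν x.2) {A} =
      ∏ j, ∏ b, ν j {b} ^ #{i | A (i, j) = b} := by
  rw [Measure.pi_singleton, Fintype.prod_prod_type_right]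
  exact prod_congr rfl fun j _ => prod_comp_eq_prod_pow_card (fun i => A (i, j)) fun b => ν j {b}

lemma pi_snd_comp_perm_singleton (σ : Equiv.Perm (Fin n)) {A B : Fin m × Fin n → α}
    (hAB : ∀ j b, #{i | B (i, j) = b} = #{i | A (i, σ j) = b}) :
    Measure.pi (fun x : Fin m × Fin n => ν (σ x.2)) {B} =
      Measure.pi (fun x : Fin m × Fin n => ν x.2) {A} :=
  calc Measure.pi (fun x : Fin m × Fin n => ν (σ x.2)) {B}
      _ = ∏ j, ∏ b, ν (σ j) {b} ^ #{i | B (i, j) = b} :=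
        pi_snd_singleton (fun j => ν (σ j)) B
      _ = ∏ j, ∏ b, ν (σ j) {b} ^ #{i | A (i, σ j) = b} := by simp only [hAB]
      _ = ∏ j, ∏ b, ν j {b} ^ #{i | A (i, j) = b} :=
        Equiv.prod_comp σ fun j => ∏ b, ν j {b} ^ #{i | A (i, j) = b}
      _ = _ := (pi_snd_singleton ν A).symm

end

lemma colBernoulliMatrixMeasure_comp_swap (q : Fin n → ℝ) (hq : ∀ j, q j ≤ 1) {c c' : Fin n}
    (hcc : c ≠ c') :
    colBernoulliMatrixMeasure m n (q ∘ Equiv.swap c c') (fun j => hq (Equiv.swap c c' j)) =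
      (colBernoulliMatrixMeasure m n q hq).map (reflectColumns · c c') := by
  refine Measure.ext_of_singleton fun B => ?_
  have hpre : (reflectColumns · c c') ⁻¹' {B} = {reflectColumns B c c'} :=
    Set.ext fun A => (reflectColumns_involutive hcc).eq_iff
  rw [Measure.map_apply .of_discrete .of_discrete, hpre]
  exact pi_snd_comp_perm_singleton
    (fun j => (PMF.bernoulli (q j).toNNReal (Real.toNNReal_le_one.mpr (hq j))).toMeasure) _
    fun j b => (card_reflectColumns_swap hcc j b).symm

lemma map_pathLen_comp_swap (q : Fin n → ℝ) (hq : ∀ j, q j ≤ 1) {c c' : Fin n}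
    (hcc : c ⋖ c') :
    (colBernoulliMatrixMeasure m n (q ∘ Equiv.swap c c') (fun j => hq (Equiv.swap c c' j))).map
      pathLen = (colBernoulliMatrixMeasure m n q hq).map pathLen := by
  rw [colBernoulliMatrixMeasure_comp_swap q hq hcc.ne, Measure.map_map .of_discrete .of_discrete]
  congr 1
  exact funext (pathLen_reflectColumns hcc)

theorem map_pathLen_comp_perm (q : Fin n → ℝ) (hq : ∀ j, q j ≤ 1)
    (σ : Equiv.Perm (Fin n)) :
    (colBernoulliMatrixMeasure m n (q ∘ σ) (fun j => hq (σ j))).map pathLen =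
      (colBernoulliMatrixMeasure m n q hq).map pathLen := by
  cases n with
  | zero => rw [Subsingleton.elim σ 1]; rfl
  | succ n =>
    have hσ :
        σ ∈ Submonoid.closure (Set.range fun i : Fin n => Equiv.swap i.castSucc i.succ) := by
      rw [Equiv.Perm.mclosure_swap_castSucc_succ]; trivial
    refine Submonoid.closure_induction (motive := fun (σ : Equiv.Perm (Fin (n + 1))) _ => ∀ q hq,
      (colBernoulliMatrixMeasure m _ (q ∘ σ) (fun j => hq (σ j))).map pathLen =
        (colBernoulliMatrixMeasure m _ q hq).map pathLen) ?_ ?_ ?_ hσ q hq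
    · rintro _ ⟨i, rfl⟩ q hq
      exact map_pathLen_comp_swap q hq (Fin.covBy_iff.2 (by simp))
    · exact fun q hq => rfl
    · exact fun σ τ _ _ hσ hτ q hq => (hτ (q ∘ σ) fun j => hq (σ j)).trans (hσ q hq)

end ODB

theorem pathLen_distribution_symmetric_general (m n : ℕ)
    (q : Fin n → ℝ) (hq1 : ∀ j, q j < 1)
    (σ : Equiv.Perm (Fin n)) (h : ℕ) :
    colBernoulliMatrixMeasure m n q (fun j => (hq1 j).le) {A | pathLen A ≤ h} =
      colBernoulliMatrixMeasure m n (q ∘ σ) (fun j => (hq1 (σ j)).le)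
        {A | pathLen A ≤ h} := by
  have hIic := congrArg (· (Set.Iic h))
    (ODB.map_pathLen_comp_perm (m := m) q (fun j => (hq1 j).le) σ)
  rwa [Measure.map_apply .of_discrete .of_discrete, Measure.map_apply .of_discrete .of_discrete,
    eq_comm] at hIic

/-- Inhomogeneous model: the distribution of the longest increasing path of a random
`m × n` 0-1 matrix with independent entries and column probabilities `q₁, …, q_n` is a
symmetric function of `(q₁, …, q_n)`: permuting the column probabilities does not change
`Prob(L(A) ≤ h)`. -/
theorem pathLen_distribution_symmetric (m n : ℕ) (hm : 1 ≤ m) (hn : 1 ≤ n)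
    (q : Fin n → ℝ) (hq0 : ∀ j, 0 < q j) (hq1 : ∀ j, q j < 1)
    (σ : Equiv.Perm (Fin n)) (h : ℕ) :
    colBernoulliMatrixMeasure m n q (fun j => (hq1 j).le) {A | pathLen A ≤ h} =
      colBernoulliMatrixMeasure m n (q ∘ σ) (fun j => (hq1 (σ j)).le)
        {A | pathLen A ≤ h} :=
  pathLen_distribution_symmetric_general m n q hq1 σ h
end
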